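/- arXiv:2209.07376 — 6 statements merged into one kernel-verified Lean document; each statement's English description precedes it below -/
import Mathlib

section
/- Let (X, ΣX) and (S, ΣS) be measurable spaces, μ a probability measure on X, P a Markov kernel from X to S, r : X → ℝ and V : S → ℝ bounded measurable, TV = r + PV with (PV)(x) = ∫_S V dP(x), and ℰ(f) = ∫_X ∫_S (f(x) − r(x) − V(s'))² P(x)(ds') μ(dx). Let F be a nonempty class of bounded measurable functions X → ℝ. Then for every Q̂ ∈ F: ∫_X (Q̂ − TV)² dμ = (ℰ(Q̂) − inf_{f ∈ F} ℰ(f)) + inf_{f ∈ F} ∫_X (f − TV)² dμ. In particular, with the temporal-difference error Γ := TV − Q̂, the squared L²(μ)-norm of Γ equals the excess expected risk of Q̂ over F plus the squared L²(μ)-approximation error of TV by F. -/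
open MeasureTheory ProbabilityTheory

lemma integrable_of_abs_le' {α : Type*} [MeasurableSpace α] (ν : Measure α)
    [IsFiniteMeasure ν] {g : α → ℝ} (hg : Measurable g) (C : ℝ) (h : ∀ a, |g a| ≤ C) :
    Integrable g ν :=
  (integrable_const C).mono' hg.aestronglyMeasurable (Filter.Eventually.of_forall h)

/-- Pointwise expansion of the inner integral. -/
lemma inner_expand' {α : Type*} [MeasurableSpace α] (ν : Measure α) [IsProbabilityMeasure ν]
    {V : α → ℝ} (hV : Measurable V) (CV : ℝ) (hVb : ∀ s, |V s| ≤ CV) (a : ℝ) :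
    ∫ s, (a - V s) ^ 2 ∂ν
      = (a - ∫ s, V s ∂ν) ^ 2 + ((∫ s, (V s) ^ 2 ∂ν) - (∫ s, V s ∂ν) ^ 2) := by
  have hVi : Integrable V ν := integrable_of_abs_le' ν hV CV hVb
  have hV2 : Integrable (fun s => (V s) ^ 2) ν := by
    refine integrable_of_abs_le' ν (hV.pow_const 2) (CV ^ 2) fun s => ?_
    have h1 : |(V s) ^ 2| = |V s| ^ 2 := by rw [abs_pow]
    rw [h1]; nlinarith [hVb s, abs_nonneg (V s)]
  have : ∀ s, (a - V s) ^ 2 = (V s) ^ 2 + ((-(2 * a)) * V s + a ^ 2) := by intro s; ring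
  rw [integral_congr_ae (Filter.Eventually.of_forall this)]
  have hg : Integrable (fun s => -(2*a) * V s + a ^ 2) ν :=
    (hVi.const_mul (-(2*a))).add (integrable_const (a^2))
  rw [integral_add hV2 hg,
    integral_add (hVi.const_mul (-(2*a))) (integrable_const (a^2)), integral_const_mul,
    integral_const]
  simp [measure_univ]
  ring

section Key

variable {X S : Type*} [MeasurableSpace X] [MeasurableSpace S]
  (μ : Measure X) [IsProbabilityMeasure μ] (P : Kernel X S) [IsMarkovKernel P]
  {r : X → ℝ} {V : S → ℝ}

/-- Risk decomposition: `ℰ(f) = ‖f - TV‖² + C`. -/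
lemma risk_decomp (hr : Measurable r) (hV : Measurable V)
    (Cr CV : ℝ) (hrb : ∀ x, |r x| ≤ Cr) (hVb : ∀ s, |V s| ≤ CV)
    {f : X → ℝ} (hf : Measurable f) (Cf : ℝ) (hfb : ∀ x, |f x| ≤ Cf) :
    ∫ x, ∫ s', (f x - r x - V s') ^ 2 ∂(P x) ∂μ
      = (∫ x, (f x - (r x + ∫ s', V s' ∂(P x))) ^ 2 ∂μ)
        + ∫ x, ((∫ s', (V s') ^ 2 ∂(P x)) - (∫ s', V s' ∂(P x)) ^ 2) ∂μ := by
  have hm : Measurable fun x => ∫ s, V s ∂(P x) :=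
    (MeasureTheory.StronglyMeasurable.integral_kernel_prod_right'
      (f := fun p : X × S => V p.2) ((hV.comp measurable_snd).stronglyMeasurable)).measurable
  have hm2 : Measurable fun x => ∫ s, (V s) ^ 2 ∂(P x) :=
    (MeasureTheory.StronglyMeasurable.integral_kernel_prod_right'
      (f := fun p : X × S => (V p.2) ^ 2)
      (((hV.comp measurable_snd).pow_const 2).stronglyMeasurable)).measurable
  have hmb : ∀ x, |∫ s, V s ∂(P x)| ≤ CV := by
    intro x
    have h := norm_integral_le_of_norm_le_const (μ := P x) (f := V) (C := CV)
      (Filter.Eventually.of_forall fun s => by simpa using hVb s)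
    simpa using h
  have hm2b : ∀ x, |∫ s, (V s) ^ 2 ∂(P x)| ≤ CV ^ 2 := by
    intro x
    have h := norm_integral_le_of_norm_le_const (μ := P x) (f := fun s => (V s) ^ 2) (C := CV ^ 2)
      (Filter.Eventually.of_forall fun s => by
        have h1 : ‖(V s) ^ 2‖ = |V s| ^ 2 := by rw [Real.norm_eq_abs, abs_pow]
        rw [h1]; nlinarith [hVb s, abs_nonneg (V s)])
    simpa using h
  have hpt : ∀ x, ∫ s', (f x - r x - V s') ^ 2 ∂(P x)
      = (f x - (r x + ∫ s', V s' ∂(P x))) ^ 2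
        + ((∫ s', (V s') ^ 2 ∂(P x)) - (∫ s', V s' ∂(P x)) ^ 2) := by
    intro x
    have := inner_expand' (P x) hV CV hVb (f x - r x)
    simpa only [sub_sub] using this
  rw [integral_congr_ae (Filter.Eventually.of_forall hpt)]
  have h1 : Integrable (fun x => (f x - (r x + ∫ s', V s' ∂(P x))) ^ 2) μ := by
    refine integrable_of_abs_le' μ (((hf.sub (hr.add hm)).pow_const 2)) ((Cf + (Cr + CV)) ^ 2)
      fun x => ?_
    have hb : |f x - (r x + ∫ s', V s' ∂(P x))| ≤ Cf + (Cr + CV) := by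
      calc |f x - (r x + ∫ s', V s' ∂(P x))| ≤ |f x| + |r x + ∫ s', V s' ∂(P x)| := abs_sub _ _
        _ ≤ Cf + (Cr + CV) := by
            have := abs_add_le (r x) (∫ s', V s' ∂(P x))
            have := hrb x; have := hmb x; have := hfb x; linarith [abs_add_le (r x) (∫ s', V s' ∂(P x))]
    have h2 : |(f x - (r x + ∫ s', V s' ∂(P x))) ^ 2| = |f x - (r x + ∫ s', V s' ∂(P x))| ^ 2 := by
      rw [abs_pow]
    rw [h2]; nlinarith [abs_nonneg (f x - (r x + ∫ s', V s' ∂(P x)))]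
  have h2 : Integrable (fun x => (∫ s', (V s') ^ 2 ∂(P x)) - (∫ s', V s' ∂(P x)) ^ 2) μ := by
    refine integrable_of_abs_le' μ (hm2.sub (hm.pow_const 2)) (CV ^ 2 + CV ^ 2) fun x => ?_
    have h3 : |(∫ s', V s' ∂(P x)) ^ 2| ≤ CV ^ 2 := by
      rw [abs_pow]; nlinarith [hmb x, abs_nonneg (∫ s', V s' ∂(P x))]
    calc |(∫ s', (V s') ^ 2 ∂(P x)) - (∫ s', V s' ∂(P x)) ^ 2|
        ≤ |∫ s', (V s') ^ 2 ∂(P x)| + |(∫ s', V s' ∂(P x)) ^ 2| := abs_sub _ _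
      _ ≤ CV ^ 2 + CV ^ 2 := add_le_add (hm2b x) h3
  exact integral_add h1 h2

end Key

/-- For an empirical class `F` and any `Q̂ ∈ F`, the squared
`L²(μ)`-norm of the temporal-difference error `Γ = TV − Q̂` equals the excess
expected risk of `Q̂` over `F` plus the squared `L²(μ)`-approximation error of the
Bellman backup `TV = r + PV` by `F`. -/
theorem td_error_eq_excess_risk_add_approx
    {X S : Type*} [MeasurableSpace X] [MeasurableSpace S]
    (μ : Measure X) [IsProbabilityMeasure μ]
    (P : Kernel X S) [IsMarkovKernel P]
    (r : X → ℝ) (V : S → ℝ)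
    (hr : Measurable r) (hV : Measurable V)
    (Cr CV : ℝ) (hrb : ∀ x, |r x| ≤ Cr) (hVb : ∀ s, |V s| ≤ CV)
    (F : Set (X → ℝ)) (hFne : F.Nonempty)
    (hFmeas : ∀ f ∈ F, Measurable f)
    (hFbdd : ∀ f ∈ F, ∃ C : ℝ, ∀ x, |f x| ≤ C)
    (Q : X → ℝ) (hQF : Q ∈ F) :
    ∫ x, (Q x - (r x + ∫ s', V s' ∂(P x))) ^ 2 ∂μ
      = ((∫ x, ∫ s', (Q x - r x - V s') ^ 2 ∂(P x) ∂μ)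
          - ⨅ f : F, ∫ x, ∫ s', (f.1 x - r x - V s') ^ 2 ∂(P x) ∂μ)
        + ⨅ f : F, ∫ x, (f.1 x - (r x + ∫ s', V s' ∂(P x))) ^ 2 ∂μ := by
  set C : ℝ := ∫ x, ((∫ s', (V s') ^ 2 ∂(P x)) - (∫ s', V s' ∂(P x)) ^ 2) ∂μ with hC
  have hdecomp : ∀ f ∈ F, ∫ x, ∫ s', (f x - r x - V s') ^ 2 ∂(P x) ∂μ
      = (∫ x, (f x - (r x + ∫ s', V s' ∂(P x))) ^ 2 ∂μ) + C := by
    intro f hf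
    obtain ⟨Cf, hCf⟩ := hFbdd f hf
    exact risk_decomp μ P hr hV Cr CV hrb hVb (hFmeas f hf) Cf hCf
  haveI : Nonempty F := hFne.to_subtype
  set g : F → ℝ := fun f => ∫ x, (f.1 x - (r x + ∫ s', V s' ∂(P x))) ^ 2 ∂μ with hg
  have hgbdd : BddBelow (Set.range g) := by
    refine ⟨0, fun y hy => ?_⟩
    obtain ⟨f, rfl⟩ := hy
    exact integral_nonneg fun x => sq_nonneg _
  have h1 : (⨅ f : F, ∫ x, ∫ s', (f.1 x - r x - V s') ^ 2 ∂(P x) ∂μ)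
      = ⨅ f : F, (g f + C) := iInf_congr fun f => hdecomp f.1 f.2
  rw [h1, ← ciInf_add hgbdd, hdecomp Q hQF]
  ring
end

section
/- Let S and A be nonempty finite sets, h ≥ 1 an integer, ε ∈ (0,1], and for each i ∈ {1,…,h−1} let P_i : S × A → PMF(S) be transition distributions. Let π = (π_1,…,π_h) and π' = (π'_1,…,π'_h) be two sequences of stochastic policies π_i, π'_i : S → PMF(A), and suppose π_i(s)(a) ≥ ε/|A| for every i, s ∈ S, a ∈ A. Fix an initial state s₁ ∈ S, and let Pr_π denote the law of the trajectory (s_1, a_1, s_2, a_2, …, s_h, a_h) generated by a_i ∼ π_i(s_i) and s_{i+1} ∼ P_i(s_i, a_i), and similarly Pr_{π'} for π'. Then for every s ∈ S: Pr_π(s_h = s) ≥ (ε/|A|)^{h−1} · Pr_{π'}(s_h = s), and for every (s,a) ∈ S × A: Pr_π(s_h = s, a_h = a) ≥ (ε/|A|)^{h} · Pr_{π'}(s_h = s). In particular, the occupancy measure at step h of any policy assigning probability at least ε/|A| to every action (e.g., an ε-greedy policy over A actions) is at least (ε/|A|)^h times the best reachability probability of the underlying state over all policies. -/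
open Finset

/-- The distribution of the state `s_{k+1}` after `k` transitions, starting from
`s₁`, when actions are drawn from the stochastic policy `π` and states evolve
according to the transition probabilities `P` (probability mass functions on the
finite sets `S` and `A` are represented as nonnegative functions summing to one). -/
noncomputable def stateDistR {S A : Type*} [Fintype S] [Fintype A] [DecidableEq S]
    (P : ℕ → S → A → S → ℝ) (π : ℕ → S → A → ℝ) (s₁ : S) : ℕ → S → ℝ
  | 0 => fun s => if s = s₁ then 1 else 0
  | k + 1 => fun s => ∑ s' : S, ∑ a : A,
      stateDistR P π s₁ k s' * π (k + 1) s' a * P (k + 1) s' a s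

/-- If a stochastic policy `π` assigns probability at least
`ε/|A|` to every action at every step (e.g. an ε-greedy policy), then its state
occupancy at step `h` dominates that of any policy `π'` up to a factor
`(ε/|A|)^{h−1}`, and its state–action occupancy up to a factor `(ε/|A|)^h`. -/
theorem eps_greedy_occupancy_lower_bound
    {S A : Type*} [Fintype S] [Fintype A] [Nonempty S] [Nonempty A] [DecidableEq S]
    (h : ℕ) (hh : 1 ≤ h) (ε : ℝ) (hε : ε ∈ Set.Ioc (0 : ℝ) 1)
    (P : ℕ → S → A → S → ℝ)
    (hP : ∀ i ∈ Finset.Icc 1 (h - 1), ∀ s a,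
      (∀ s', 0 ≤ P i s a s') ∧ ∑ s', P i s a s' = 1)
    (π π' : ℕ → S → A → ℝ)
    (hπ : ∀ i ∈ Finset.Icc 1 h, ∀ s, (∀ a, 0 ≤ π i s a) ∧ ∑ a, π i s a = 1)
    (hπ' : ∀ i ∈ Finset.Icc 1 h, ∀ s, (∀ a, 0 ≤ π' i s a) ∧ ∑ a, π' i s a = 1)
    (hlow : ∀ i ∈ Finset.Icc 1 h, ∀ s a, ε / (Fintype.card A : ℝ) ≤ π i s a)
    (s₁ : S) :
    (∀ s : S, (ε / (Fintype.card A : ℝ)) ^ (h - 1) * stateDistR P π' s₁ (h - 1) s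
        ≤ stateDistR P π s₁ (h - 1) s)
      ∧ ∀ (s : S) (a : A),
          (ε / (Fintype.card A : ℝ)) ^ h * stateDistR P π' s₁ (h - 1) s
            ≤ stateDistR P π s₁ (h - 1) s * π h s a := by

  obtain ⟨hε0, hε1⟩ := hε
  set c := ε / (Fintype.card A : ℝ) with hcdef
  have hcard : (0:ℝ) < Fintype.card A := by
    exact_mod_cast Fintype.card_pos
  have hc0 : 0 ≤ c := div_nonneg hε0.le hcard.le
  have key : ∀ k, k ≤ h - 1 →
      (∀ s, 0 ≤ stateDistR P π' s₁ k s) ∧ (∀ s, 0 ≤ stateDistR P π s₁ k s) ∧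
      (∀ s, c ^ k * stateDistR P π' s₁ k s ≤ stateDistR P π s₁ k s) := by
    intro k
    induction k with
    | zero =>
      intro _
      refine ⟨?_, ?_, ?_⟩ <;> intro s <;> simp only [stateDistR, pow_zero, one_mul] <;>
        split <;> norm_num
    | succ k ih =>
      intro hk1
      have hk : k ≤ h - 1 := Nat.le_of_succ_le hk1
      obtain ⟨h1, h2, h3⟩ := ih hk
      have hmem : k + 1 ∈ Finset.Icc 1 (h - 1) := by
        rw [Finset.mem_Icc]; omega
      have hmemh : k + 1 ∈ Finset.Icc 1 h := by
        rw [Finset.mem_Icc]; omega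
      have hPnn : ∀ s a s', 0 ≤ P (k+1) s a s' := fun s a s' => (hP _ hmem s a).1 s'
      refine ⟨?_, ?_, ?_⟩
      · intro s
        simp only [stateDistR]
        refine Finset.sum_nonneg fun s' _ => Finset.sum_nonneg fun a _ => ?_
        exact mul_nonneg (mul_nonneg (h1 s') ((hπ' _ hmemh s').1 a)) (hPnn s' a s)
      · intro s
        simp only [stateDistR]
        refine Finset.sum_nonneg fun s' _ => Finset.sum_nonneg fun a _ => ?_
        exact mul_nonneg (mul_nonneg (h2 s') ((hπ _ hmemh s').1 a)) (hPnn s' a s)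
      · intro s
        simp only [stateDistR, Finset.mul_sum]
        refine Finset.sum_le_sum fun s' _ => Finset.sum_le_sum fun a _ => ?_
        have hle1 : π' (k+1) s' a ≤ 1 := by
          have hsum := (hπ' _ hmemh s').2
          have hnn := (hπ' _ hmemh s').1
          calc π' (k+1) s' a ≤ ∑ b, π' (k+1) s' b :=
                Finset.single_le_sum (fun b _ => hnn b) (Finset.mem_univ a)
            _ = 1 := hsum
        have hlow' : c ≤ π (k+1) s' a := hlow _ hmemh s' a
        have hstep : c ^ k * stateDistR P π' s₁ k s' * (c * π' (k+1) s' a)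
            ≤ stateDistR P π s₁ k s' * π (k+1) s' a := by
          refine mul_le_mul (h3 s') ?_ (mul_nonneg hc0 ((hπ' _ hmemh s').1 a)) (h2 s')
          calc c * π' (k+1) s' a ≤ c * 1 := by
                exact mul_le_mul_of_nonneg_left hle1 hc0
            _ = c := mul_one c
            _ ≤ π (k+1) s' a := hlow'
        calc c ^ (k+1) * (stateDistR P π' s₁ k s' * π' (k+1) s' a * P (k+1) s' a s)
            = (c ^ k * stateDistR P π' s₁ k s' * (c * π' (k+1) s' a)) * P (k+1) s' a s := by
              ring
          _ ≤ (stateDistR P π s₁ k s' * π (k+1) s' a) * P (k+1) s' a s :=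
              mul_le_mul_of_nonneg_right hstep (hPnn s' a s)
  obtain ⟨h1, h2, h3⟩ := key (h - 1) le_rfl
  refine ⟨h3, fun s a => ?_⟩
  have hmemh : h ∈ Finset.Icc 1 h := by rw [Finset.mem_Icc]; omega
  have hch : c ^ h = c ^ (h - 1) * c := by
    rw [← pow_succ]
    congr 1
    omega
  have h3' := h3 s
  calc c ^ h * stateDistR P π' s₁ (h - 1) s
      = (c ^ (h - 1) * stateDistR P π' s₁ (h - 1) s) * c := by rw [hch]; ring
    _ ≤ stateDistR P π s₁ (h - 1) s * π h s a :=
        mul_le_mul h3' (hlow _ hmemh s a) hc0 (h2 s)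
end

section
/- Let T, H be positive integers, let (X, Σ) be a measurable space, and for each t ∈ {1,…,T} and h ∈ {1,…,H} let Γ^t_h : X → ℝ be a bounded measurable function and μ^t_h a probability measure on X. Suppose there is κ ∈ (0,1] such that for every t, h: μ^t_h({x : |Γ^t_h(x)| ≥ ‖Γ^t_h‖_∞ − t^{-1/2}}) ≥ κ. Then Σ_{t=1}^T Σ_{h=1}^H ‖Γ^t_h‖_∞ ≤ κ^{-1/2} · √T · Σ_{h=1}^H ( Σ_{t=1}^T ‖Γ^t_h‖²_{L²(μ^t_h)} )^{1/2} + 2H√T, where ‖Γ‖_{L²(μ)} = (∫ Γ² dμ)^{1/2} and ‖Γ‖_∞ = sup_x |Γ(x)|. -/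
open MeasureTheory

lemma rpow_neg_half_eq_inv_sqrt {x : ℝ} (hx : 0 ≤ x) :
    x ^ (-(1 : ℝ) / 2) = (Real.sqrt x)⁻¹ := by
  rw [neg_div, Real.rpow_neg hx, Real.sqrt_eq_rpow]

lemma sum_inv_sqrt_le (T : ℕ) :
    ∑ t ∈ Finset.Icc 1 T, (Real.sqrt t)⁻¹ ≤ 2 * Real.sqrt T := by
  induction T with
  | zero => simp
  | succ n ih =>
    rw [Finset.sum_Icc_succ_top (by omega)]
    have hpos : 0 < Real.sqrt (n + 1) := Real.sqrt_pos.mpr (by positivity)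
    have key : (Real.sqrt (n + 1 : ℕ))⁻¹ ≤ 2 * Real.sqrt (n + 1 : ℕ) - 2 * Real.sqrt n := by
      push_cast
      rw [inv_eq_one_div, div_le_iff₀ hpos]
      have h1 : Real.sqrt (n + 1) * Real.sqrt (n + 1) = (n : ℝ) + 1 :=
        Real.mul_self_sqrt (by positivity)
      have h2 : Real.sqrt n * Real.sqrt (n + 1) ≤ (n : ℝ) + 1 / 2 := by
        rw [← Real.sqrt_mul (Nat.cast_nonneg n)]
        have : ((n : ℝ) * (n + 1)) ≤ ((n : ℝ) + 1 / 2) ^ 2 := by nlinarith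
        calc Real.sqrt ((n : ℝ) * (n + 1)) ≤ Real.sqrt (((n : ℝ) + 1 / 2) ^ 2) :=
              Real.sqrt_le_sqrt this
          _ = (n : ℝ) + 1 / 2 := Real.sqrt_sq (by positivity)
      nlinarith
    have := ih
    push_cast at key ⊢
    linarith
/-- If each measure `μ^t_h` puts mass at least `κ` on the
near-maximum level set of `|Γ^t_h|` at slack `t^{−1/2}`, then the double sum of sup
norms of the `Γ^t_h` is bounded by `κ^{−1/2} √T Σ_h (Σ_t ‖Γ^t_h‖²_{L²(μ^t_h)})^{1/2}
+ 2H√T`. -/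
theorem sum_sup_norm_td_errors_le
    {X : Type*} [MeasurableSpace X] [Nonempty X]
    (T H : ℕ) (hT : 1 ≤ T) (hH : 1 ≤ H)
    (Γ : ℕ → ℕ → X → ℝ) (μ : ℕ → ℕ → Measure X)
    [∀ t h, IsProbabilityMeasure (μ t h)]
    (hmeas : ∀ t h, Measurable (Γ t h))
    (hbdd : ∀ t h, ∃ C : ℝ, ∀ x, |Γ t h x| ≤ C)
    (κ : ℝ) (hκ : κ ∈ Set.Ioc (0 : ℝ) 1)
    (hmass : ∀ t ∈ Finset.Icc 1 T, ∀ h ∈ Finset.Icc 1 H,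
      κ ≤ ((μ t h)
        {x | (⨆ y, |Γ t h y|) - (t : ℝ) ^ (-(1 : ℝ) / 2) ≤ |Γ t h x|}).toReal) :
    ∑ t ∈ Finset.Icc 1 T, ∑ h ∈ Finset.Icc 1 H, (⨆ x, |Γ t h x|)
      ≤ κ ^ (-(1 : ℝ) / 2) * Real.sqrt T
          * ∑ h ∈ Finset.Icc 1 H,
              Real.sqrt (∑ t ∈ Finset.Icc 1 T, ∫ x, (Γ t h x) ^ 2 ∂(μ t h))
        + 2 * H * Real.sqrt T := by
  obtain ⟨hκ0, hκ1⟩ := hκ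
  have hκrw : κ ^ (-(1 : ℝ) / 2) = (Real.sqrt κ)⁻¹ := rpow_neg_half_eq_inv_sqrt hκ0.le
  have hsqκ : 0 < Real.sqrt κ := Real.sqrt_pos.mpr hκ0
  -- integral of Γ² is nonnegative
  have hintnn : ∀ t h, 0 ≤ ∫ x, (Γ t h x) ^ 2 ∂(μ t h) := fun t h =>
    integral_nonneg fun x => sq_nonneg _
  -- pointwise (in t,h) bound
  have key : ∀ t ∈ Finset.Icc 1 T, ∀ h ∈ Finset.Icc 1 H,
      (⨆ x, |Γ t h x|) ≤ (Real.sqrt κ)⁻¹ * Real.sqrt (∫ x, (Γ t h x) ^ 2 ∂(μ t h))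
        + (Real.sqrt t)⁻¹ := by
    intro t ht h hh
    obtain ⟨C, hC⟩ := hbdd t h
    have hbdda : BddAbove (Set.range fun x => |Γ t h x|) := ⟨C, by rintro _ ⟨x, rfl⟩; exact hC x⟩
    set S := ⨆ x, |Γ t h x| with hS
    have hSle : ∀ x, |Γ t h x| ≤ S := fun x => le_ciSup hbdda x
    have hSnn : 0 ≤ S := le_trans (abs_nonneg _) (hSle Classical.ofNonempty)
    have ht1 : 1 ≤ t := (Finset.mem_Icc.mp ht).1
    have htpos : (0 : ℝ) < t := by exact_mod_cast Nat.lt_of_lt_of_le Nat.zero_lt_one ht1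
    have htrw : (t : ℝ) ^ (-(1 : ℝ) / 2) = (Real.sqrt t)⁻¹ :=
      rpow_neg_half_eq_inv_sqrt htpos.le
    have hIsqrt : 0 ≤ Real.sqrt (∫ x, (Γ t h x) ^ 2 ∂(μ t h)) := Real.sqrt_nonneg _
    by_cases hcase : S ≤ (Real.sqrt t)⁻¹
    · have : 0 ≤ (Real.sqrt κ)⁻¹ * Real.sqrt (∫ x, (Γ t h x) ^ 2 ∂(μ t h)) := by positivity
      linarith
    · push_neg at hcase
      set c := S - (Real.sqrt t)⁻¹ with hc
      have hcpos : 0 < c := by simp [hc]; linarith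
      set A := {x | S - (t : ℝ) ^ (-(1 : ℝ) / 2) ≤ |Γ t h x|} with hA
      have hAeq : A = {x | c ≤ |Γ t h x|} := by rw [hA, hc, htrw]
      have hAmeas : MeasurableSet A := by
        rw [hAeq]
        exact measurableSet_le measurable_const (hmeas t h).abs
      have hmassA : κ ≤ ((μ t h) A).toReal := hmass t ht h hh
      have hint : Integrable (fun x => (Γ t h x) ^ 2) (μ t h) := by
        apply Integrable.mono' (integrable_const (C ^ 2))
          ((hmeas t h).pow_const 2).aestronglyMeasurable
        filter_upwards with x
        rw [Real.norm_eq_abs, abs_pow]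
        exact pow_le_pow_left₀ (abs_nonneg _) (hC x) 2
      have hstep1 : c ^ 2 * ((μ t h) A).toReal ≤ ∫ x in A, (Γ t h x) ^ 2 ∂(μ t h) := by
        rw [mul_comm, ← smul_eq_mul, ← measureReal_def]
        apply setIntegral_ge_of_const_le hAmeas (measure_ne_top _ _)
        · intro x hx
          rw [hAeq] at hx
          calc c ^ 2 ≤ |Γ t h x| ^ 2 := pow_le_pow_left₀ hcpos.le hx 2
            _ = (Γ t h x) ^ 2 := sq_abs _
        · exact hint.integrableOn
      have hstep2 : ∫ x in A, (Γ t h x) ^ 2 ∂(μ t h) ≤ ∫ x, (Γ t h x) ^ 2 ∂(μ t h) :=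
        setIntegral_le_integral hint (Filter.Eventually.of_forall fun x => sq_nonneg _)
      have hchain : c ^ 2 * κ ≤ ∫ x, (Γ t h x) ^ 2 ∂(μ t h) := by
        calc c ^ 2 * κ ≤ c ^ 2 * ((μ t h) A).toReal :=
              mul_le_mul_of_nonneg_left hmassA (sq_nonneg _)
          _ ≤ _ := le_trans hstep1 hstep2
      -- conclude c ≤ (√κ)⁻¹ * √∫
      have hcle : c ≤ (Real.sqrt κ)⁻¹ * Real.sqrt (∫ x, (Γ t h x) ^ 2 ∂(μ t h)) := by
        rw [← Real.sqrt_inv, ← Real.sqrt_mul (by positivity)]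
        have : c = Real.sqrt (c ^ 2) := (Real.sqrt_sq hcpos.le).symm
        rw [this]
        apply Real.sqrt_le_sqrt
        rw [inv_mul_eq_div, le_div_iff₀ hκ0]
        linarith
      have : S = c + (Real.sqrt t)⁻¹ := by rw [hc]; ring
      rw [this]
      exact add_le_add_left hcle _
  -- sum the bound
  calc ∑ t ∈ Finset.Icc 1 T, ∑ h ∈ Finset.Icc 1 H, (⨆ x, |Γ t h x|)
      ≤ ∑ t ∈ Finset.Icc 1 T, ∑ h ∈ Finset.Icc 1 H,
          ((Real.sqrt κ)⁻¹ * Real.sqrt (∫ x, (Γ t h x) ^ 2 ∂(μ t h)) + (Real.sqrt t)⁻¹) := by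
        apply Finset.sum_le_sum
        intro t ht
        exact Finset.sum_le_sum fun h hh => key t ht h hh
    _ = (∑ h ∈ Finset.Icc 1 H, ∑ t ∈ Finset.Icc 1 T,
          (Real.sqrt κ)⁻¹ * Real.sqrt (∫ x, (Γ t h x) ^ 2 ∂(μ t h)))
        + (H : ℝ) * ∑ t ∈ Finset.Icc 1 T, (Real.sqrt t)⁻¹ := by
        have e1 : ∀ t, ∑ h ∈ Finset.Icc 1 H,
            ((Real.sqrt κ)⁻¹ * Real.sqrt (∫ x, (Γ t h x) ^ 2 ∂(μ t h)) + (Real.sqrt t)⁻¹)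
            = (∑ h ∈ Finset.Icc 1 H,
                (Real.sqrt κ)⁻¹ * Real.sqrt (∫ x, (Γ t h x) ^ 2 ∂(μ t h)))
              + (H : ℝ) * (Real.sqrt t)⁻¹ := by
          intro t
          rw [Finset.sum_add_distrib, Finset.sum_const, Nat.card_Icc]
          simp [nsmul_eq_mul]
        rw [Finset.sum_congr rfl fun t _ => e1 t, Finset.sum_add_distrib,
          Finset.sum_comm, Finset.mul_sum]
    _ ≤ κ ^ (-(1 : ℝ) / 2) * Real.sqrt T
          * ∑ h ∈ Finset.Icc 1 H,
              Real.sqrt (∑ t ∈ Finset.Icc 1 T, ∫ x, (Γ t h x) ^ 2 ∂(μ t h))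
        + 2 * H * Real.sqrt T := by
        apply add_le_add
        · rw [hκrw]
          have cs : ∀ h ∈ Finset.Icc 1 H,
              ∑ t ∈ Finset.Icc 1 T, Real.sqrt (∫ x, (Γ t h x) ^ 2 ∂(μ t h))
                ≤ Real.sqrt T * Real.sqrt (∑ t ∈ Finset.Icc 1 T, ∫ x, (Γ t h x) ^ 2 ∂(μ t h)) := by
            intro h hh
            have h1 : (∑ t ∈ Finset.Icc 1 T, Real.sqrt (∫ x, (Γ t h x) ^ 2 ∂(μ t h))) ^ 2
                ≤ ((Finset.Icc 1 T).card : ℝ)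
                  * ∑ t ∈ Finset.Icc 1 T, (Real.sqrt (∫ x, (Γ t h x) ^ 2 ∂(μ t h))) ^ 2 := by
              exact sq_sum_le_card_mul_sum_sq
            rw [Nat.card_Icc] at h1
            simp only [Nat.add_sub_cancel] at h1
            have h2 : ∑ t ∈ Finset.Icc 1 T, (Real.sqrt (∫ x, (Γ t h x) ^ 2 ∂(μ t h))) ^ 2
                = ∑ t ∈ Finset.Icc 1 T, ∫ x, (Γ t h x) ^ 2 ∂(μ t h) :=
              Finset.sum_congr rfl fun t _ => Real.sq_sqrt (hintnn t h)
            rw [h2] at h1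
            have h3 : (0 : ℝ) ≤ ∑ t ∈ Finset.Icc 1 T, Real.sqrt (∫ x, (Γ t h x) ^ 2 ∂(μ t h)) :=
              Finset.sum_nonneg fun t _ => Real.sqrt_nonneg _
            calc ∑ t ∈ Finset.Icc 1 T, Real.sqrt (∫ x, (Γ t h x) ^ 2 ∂(μ t h))
                = Real.sqrt ((∑ t ∈ Finset.Icc 1 T,
                    Real.sqrt (∫ x, (Γ t h x) ^ 2 ∂(μ t h))) ^ 2) := (Real.sqrt_sq h3).symm
              _ ≤ Real.sqrt ((T : ℝ) * ∑ t ∈ Finset.Icc 1 T, ∫ x, (Γ t h x) ^ 2 ∂(μ t h)) :=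
                  Real.sqrt_le_sqrt h1
              _ = Real.sqrt T * Real.sqrt (∑ t ∈ Finset.Icc 1 T, ∫ x, (Γ t h x) ^ 2 ∂(μ t h)) :=
                  Real.sqrt_mul (Nat.cast_nonneg T) _
          calc ∑ h ∈ Finset.Icc 1 H, ∑ t ∈ Finset.Icc 1 T,
                (Real.sqrt κ)⁻¹ * Real.sqrt (∫ x, (Γ t h x) ^ 2 ∂(μ t h))
              = (Real.sqrt κ)⁻¹ * ∑ h ∈ Finset.Icc 1 H, ∑ t ∈ Finset.Icc 1 T,
                  Real.sqrt (∫ x, (Γ t h x) ^ 2 ∂(μ t h)) := by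
                rw [Finset.mul_sum]
                exact Finset.sum_congr rfl fun h _ => (Finset.mul_sum _ _ _).symm
            _ ≤ (Real.sqrt κ)⁻¹ * ∑ h ∈ Finset.Icc 1 H,
                  (Real.sqrt T * Real.sqrt (∑ t ∈ Finset.Icc 1 T, ∫ x, (Γ t h x) ^ 2 ∂(μ t h))) := by
                apply mul_le_mul_of_nonneg_left _ (by positivity)
                exact Finset.sum_le_sum cs
            _ = (Real.sqrt κ)⁻¹ * Real.sqrt T * ∑ h ∈ Finset.Icc 1 H,
                  Real.sqrt (∑ t ∈ Finset.Icc 1 T, ∫ x, (Γ t h x) ^ 2 ∂(μ t h)) := by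
                rw [← Finset.mul_sum, mul_assoc]
        · calc (H : ℝ) * ∑ t ∈ Finset.Icc 1 T, (Real.sqrt t)⁻¹
              ≤ (H : ℝ) * (2 * Real.sqrt T) :=
                mul_le_mul_of_nonneg_left (sum_inv_sqrt_le T) (Nat.cast_nonneg H)
            _ = 2 * H * Real.sqrt T := by ring
end

section
/- Let σ(u) = max(u, 0) be the ReLU function, and for B > 0 let F_SNN be the class of two-layer networks f : [0,1]^d → ℝ of the form f(x) = (1/m) Σ_{k=1}^m b_k σ(w_kᵀ x + c_k) (any width m ≥ 1, parameters b_k, c_k ∈ ℝ, w_k ∈ ℝ^d) whose ℓ1 path norm satisfies (1/m) Σ_{k=1}^m |b_k| (‖w_k‖_1 + |c_k|) ≤ B. Then for every n ≥ 1 and every choice of points x_1,…,x_n ∈ [0,1]^d, the empirical Rademacher complexity satisfies R̂_n(F_SNN, X) = E_ξ[ sup_{f ∈ F_SNN} (1/n) Σ_{i=1}^n ξ_i f(x_i) ] ≤ 2B √(2 log(2d) / n), where ξ_1,…,ξ_n are i.i.d. Rademacher random variables. -/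
open Finset

/-- The class of two-layer ReLU networks `x ↦ (1/m) Σ_k b_k σ(w_kᵀ x + c_k)` (any
width `m ≥ 1`) on `ℝ^d` whose ℓ1 path norm `(1/m) Σ_k |b_k| (‖w_k‖₁ + |c_k|)` is at
most `B`. -/
noncomputable def pathNormBall (d : ℕ) (B : ℝ) : Set ((Fin d → ℝ) → ℝ) :=
  {f | ∃ (m : ℕ) (_ : 1 ≤ m) (b : Fin m → ℝ) (c : Fin m → ℝ) (w : Fin m → Fin d → ℝ),
        (f = fun x => (m : ℝ)⁻¹ * ∑ k, b k * max (∑ j, w k j * x j + c k) 0) ∧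
        (m : ℝ)⁻¹ * ∑ k, |b k| * ((∑ j, |w k j|) + |c k|) ≤ B}

namespace RadProof
open Real


noncomputable def eps (b : Bool) : ℝ := if b then 1 else -1

lemma eps_not (b : Bool) : eps (!b) = - eps b := by cases b <;> simp [eps]

lemma abs_eps (b : Bool) : |eps b| = 1 := by cases b <;> simp [eps]

lemma eps_mul_self (b : Bool) : eps b * eps b = 1 := by cases b <;> norm_num [eps]

lemma ciSup_add_ciSup_le {ι : Type*} [Nonempty ι] {f g : ι → ℝ} {c : ℝ}
    (h : ∀ a b, f a + g b ≤ c) : (⨆ a, f a) + (⨆ b, g b) ≤ c := by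
  have h1 : ∀ a, f a ≤ c - ⨆ b, g b := fun a => by
    have : (⨆ b, g b) ≤ c - f a := ciSup_le fun b => by linarith [h a b]
    linarith
  linarith [ciSup_le h1]

lemma sum_eps_abs_le {n : ℕ} (σ : Fin n → Bool) (ψ : Fin n → ℝ) (hψ : ∀ i, |ψ i| ≤ 1) :
    |∑ i, eps (σ i) * ψ i| ≤ n := by
  calc |∑ i, eps (σ i) * ψ i| ≤ ∑ i, |eps (σ i) * ψ i| := Finset.abs_sum_le_sum_abs _ _
  _ ≤ ∑ _i : Fin n, (1:ℝ) := by
      refine Finset.sum_le_sum fun i _ => ?_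
      rw [abs_mul, abs_eps, one_mul]; exact hψ i
  _ = n := by simp

lemma exchange {ι : Type*} [Nonempty ι] (C g : ι → ℝ) (K : ℝ)
    (hb : ∀ a, |C a| + |g a| ≤ K) :
    (⨆ a, C a + |g a|) + (⨆ a, C a - |g a|)
      ≤ (⨆ a, C a + g a) + (⨆ a, C a - g a) := by
  have bdd1 : BddAbove (Set.range fun a => C a + g a) := by
    refine ⟨K, ?_⟩; rintro _ ⟨a, rfl⟩
    have h := hb a; have h1 := le_abs_self (C a); have h2 := le_abs_self (g a)
    dsimp; linarith
  have bdd2 : BddAbove (Set.range fun a => C a - g a) := by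
    refine ⟨K, ?_⟩; rintro _ ⟨a, rfl⟩
    have h := hb a; have h1 := le_abs_self (C a); have h2 := neg_abs_le (g a)
    dsimp; linarith
  refine ciSup_add_ciSup_le fun a b => ?_
  have key : |g a| - |g b| ≤ |g a - g b| := abs_sub_abs_le_abs_sub _ _
  rcases le_total (g b) (g a) with h | h
  · have h3 : |g a| - |g b| ≤ g a - g b := by
      rwa [abs_of_nonneg (by linarith : (0:ℝ) ≤ g a - g b)] at key
    calc C a + |g a| + (C b - |g b|) ≤ (C a + g a) + (C b - g b) := by linarith
    _ ≤ _ := add_le_add (le_ciSup bdd1 a) (le_ciSup bdd2 b)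
  · have h3 : |g a| - |g b| ≤ g b - g a := by
      rw [abs_sub_comm] at key
      rwa [abs_of_nonneg (by linarith : (0:ℝ) ≤ g b - g a)] at key
    calc C a + |g a| + (C b - |g b|) ≤ (C a - g a) + (C b + g b) := by linarith
    _ ≤ (⨆ a, C a - g a) + (⨆ a, C a + g a) := add_le_add (le_ciSup bdd2 a) (le_ciSup bdd1 b)
    _ = _ := add_comm _ _

section Contraction

variable {n : ℕ} {Θ : Type*} [Nonempty Θ]

noncomputable def V (ℓ : Θ → Fin n → ℝ) (s : Finset (Fin n)) (σ : Fin n → Bool) : ℝ :=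
  ⨆ θ, ∑ i, eps (σ i) * (if i ∈ s then ℓ θ i else |ℓ θ i|)

lemma contraction_step (ℓ : Θ → Fin n → ℝ) (hℓ : ∀ θ i, |ℓ θ i| ≤ 1)
    {s : Finset (Fin n)} {k : Fin n} (hk : k ∉ s) :
    ∑ σ : Fin n → Bool, V ℓ s σ ≤ ∑ σ : Fin n → Bool, V ℓ (insert k s) σ := by
  classical
  set e := Equiv.funSplitAt k Bool with he
  have hsum : ∀ s' : Finset (Fin n), ∑ σ : Fin n → Bool, V ℓ s' σ
      = ∑ ρ : {j : Fin n // j ≠ k} → Bool,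
          (V ℓ s' (e.symm (true, ρ)) + V ℓ s' (e.symm (false, ρ))) := by
    intro s'
    rw [← Equiv.sum_comp e.symm (fun σ => V ℓ s' σ), Fintype.sum_prod_type_right]
    refine Finset.sum_congr rfl fun ρ _ => ?_
    rw [Fintype.sum_bool]
  rw [hsum s, hsum (insert k s)]
  refine Finset.sum_le_sum fun ρ _ => ?_
  have happ : ∀ (b : Bool) (j : Fin n) (h : j ≠ k), e.symm (b, ρ) j = ρ ⟨j, h⟩ := by
    intro b j h
    simp [he, Equiv.funSplitAt, Equiv.piSplitAt, h]
  have happk : ∀ b : Bool, e.symm (b, ρ) k = b := by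
    intro b; simp [he, Equiv.funSplitAt, Equiv.piSplitAt]
  -- the common part
  set C : Θ → ℝ := fun θ =>
    ∑ i ∈ univ.erase k, eps (e.symm (true, ρ) i) * (if i ∈ s then ℓ θ i else |ℓ θ i|) with hC
  have hVs : ∀ b : Bool, V ℓ s (e.symm (b, ρ))
      = ⨆ θ, (C θ + eps b * |ℓ θ k|) := by
    intro b
    unfold V
    refine iSup_congr fun θ => ?_
    rw [← Finset.add_sum_erase _ _ (Finset.mem_univ k)]
    rw [happk b, if_neg hk]
    rw [add_comm]
    congr 1
    refine Finset.sum_congr rfl fun i hi => ?_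
    have hik : i ≠ k := Finset.ne_of_mem_erase hi
    rw [happ b i hik, happ true i hik]
  have hVins : ∀ b : Bool, V ℓ (insert k s) (e.symm (b, ρ))
      = ⨆ θ, (C θ + eps b * ℓ θ k) := by
    intro b
    unfold V
    refine iSup_congr fun θ => ?_
    rw [← Finset.add_sum_erase _ _ (Finset.mem_univ k)]
    rw [happk b, if_pos (Finset.mem_insert_self k s)]
    rw [add_comm]
    congr 1
    refine Finset.sum_congr rfl fun i hi => ?_
    have hik : i ≠ k := Finset.ne_of_mem_erase hi
    rw [happ b i hik, happ true i hik]
    congr 1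
    simp [Finset.mem_insert, hik]
  have hbC : ∀ θ, |C θ| + |ℓ θ k| ≤ (n : ℝ) + 1 := by
    intro θ
    have h1 : |C θ| ≤ (n : ℝ) := by
      rw [hC]
      calc |∑ i ∈ univ.erase k, eps (e.symm (true, ρ) i) * (if i ∈ s then ℓ θ i else |ℓ θ i|)|
          ≤ ∑ i ∈ univ.erase k, |eps (e.symm (true, ρ) i) * (if i ∈ s then ℓ θ i else |ℓ θ i|)| :=
            Finset.abs_sum_le_sum_abs _ _
        _ ≤ ∑ _i ∈ univ.erase k, (1:ℝ) := by
            refine Finset.sum_le_sum fun i _ => ?_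
            rw [abs_mul, abs_eps, one_mul]
            split
            · exact hℓ θ i
            · rw [abs_abs]; exact hℓ θ i
        _ ≤ ∑ _i : Fin n, (1:ℝ) := by
            exact Finset.sum_le_sum_of_subset_of_nonneg (Finset.erase_subset k univ) (by intros; norm_num)
        _ = n := by simp
    have h2 : |ℓ θ k| ≤ 1 := hℓ θ k
    linarith
  rw [hVs true, hVs false, hVins true, hVins false]
  simp only [eps, if_pos, if_neg, Bool.cond_true]
  norm_num
  exact exchange C (fun θ => ℓ θ k) ((n : ℝ) + 1) hbC

lemma contraction (ℓ : Θ → Fin n → ℝ) (hℓ : ∀ θ i, |ℓ θ i| ≤ 1) :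
    ∑ σ : Fin n → Bool, (⨆ θ, ∑ i, eps (σ i) * |ℓ θ i|)
      ≤ ∑ σ : Fin n → Bool, ⨆ θ, ∑ i, eps (σ i) * ℓ θ i := by
  classical
  have main : ∀ s : Finset (Fin n),
      ∑ σ : Fin n → Bool, V ℓ ∅ σ ≤ ∑ σ : Fin n → Bool, V ℓ s σ := by
    intro s
    induction s using Finset.induction_on with
    | empty => exact le_refl _
    | @insert k s hk ih => exact ih.trans (contraction_step ℓ hℓ hk)
  have h := main univ
  unfold V at h
  simpa using h

end Contraction




section Massart

variable {n : ℕ}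

noncomputable def Avec {m : ℕ} (a : Fin m → Fin n → ℝ) (j : Fin m) (σ : Fin n → Bool) : ℝ :=
  ∑ i, eps (σ i) * a j i

noncomputable def M0 {m : ℕ} (a : Fin (m+1) → Fin n → ℝ) (σ : Fin n → Bool) : ℝ :=
  (univ : Finset (Fin (m+1))).sup' univ_nonempty fun j => |Avec a j σ|

lemma abs_Avec_le_M0 {m : ℕ} (a : Fin (m+1) → Fin n → ℝ) (j : Fin (m+1)) (σ : Fin n → Bool) :
    |Avec a j σ| ≤ M0 a σ := by
  unfold M0; exact Finset.le_sup' (fun j => |Avec a j σ|) (Finset.mem_univ j)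

lemma M0_nonneg {m : ℕ} (a : Fin (m+1) → Fin n → ℝ) (σ : Fin n → Bool) : 0 ≤ M0 a σ :=
  le_trans (abs_nonneg _) (abs_Avec_le_M0 a 0 σ)

lemma sum_prod_bool (g : Fin n → Bool → ℝ) :
    ∑ σ : Fin n → Bool, ∏ i, g i (σ i) = ∏ i, (g i true + g i false) := by
  classical
  have h := Fintype.prod_sum (f := g)
  rw [← h]
  exact Finset.prod_congr rfl fun i _ => by rw [Fintype.sum_bool]

lemma mgf_bound (t : Fin n → ℝ) (ht : ∀ i, |t i| ≤ 1) (μ : ℝ) :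
    ∑ σ : Fin n → Bool, Real.exp (μ * ∑ i, eps (σ i) * t i)
      ≤ 2^n * Real.exp (μ^2 * n / 2) := by
  have h1 : ∀ σ : Fin n → Bool,
      Real.exp (μ * ∑ i, eps (σ i) * t i) = ∏ i, Real.exp (μ * (eps (σ i) * t i)) := by
    intro σ; rw [← Real.exp_sum, Finset.mul_sum]
  calc ∑ σ : Fin n → Bool, Real.exp (μ * ∑ i, eps (σ i) * t i)
      = ∑ σ : Fin n → Bool, ∏ i, Real.exp (μ * (eps (σ i) * t i)) := by
        exact Finset.sum_congr rfl fun σ _ => h1 σ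
    _ = ∏ i, (Real.exp (μ * (eps true * t i)) + Real.exp (μ * (eps false * t i))) :=
        sum_prod_bool (fun i b => Real.exp (μ * (eps b * t i)))
    _ ≤ ∏ i, (2 * Real.exp (μ^2 / 2)) := by
        refine Finset.prod_le_prod (fun i _ => by positivity) (fun i _ => ?_)
        have he : eps true = (1:ℝ) := rfl
        have he2 : eps false = (-1:ℝ) := rfl
        rw [he, he2]
        have hcosh : Real.exp (μ * (1 * t i)) + Real.exp (μ * (-1 * t i))
            = 2 * Real.cosh (μ * t i) := by
          rw [Real.cosh_eq]; ring_nf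
        rw [hcosh]
        have h2 : Real.cosh (μ * t i) ≤ Real.exp ((μ * t i)^2 / 2) :=
          Real.cosh_le_exp_half_sq _
        have h3 : (μ * t i)^2 / 2 ≤ μ^2 / 2 := by
          have : (t i)^2 ≤ 1 := by nlinarith [ht i, abs_nonneg (t i), sq_abs (t i)]
          nlinarith [sq_nonneg μ]
        have := (Real.exp_le_exp.2 h3)
        nlinarith [Real.cosh_pos (μ * t i)]
    _ = 2^n * Real.exp (μ^2 * n / 2) := by
        rw [Finset.prod_const, Finset.card_univ, Fintype.card_fin, mul_pow,
          ← Real.exp_nat_mul]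
        ring_nf


lemma massart (m : ℕ) (hn : 0 < n) (a : Fin (m+1) → Fin n → ℝ) (ha : ∀ j i, |a j i| ≤ 1) :
    ∑ σ : Fin n → Bool, M0 a σ
      ≤ 2^n * (n * Real.sqrt (2 * Real.log (2*(m+1)) / n)) := by
  classical
  set L : ℝ := Real.log (2*(m+1)) with hLdef
  have hL : 0 < L := by
    apply Real.log_pos
    have : (1:ℝ) ≤ (m+1 : ℕ) := by exact_mod_cast Nat.one_le_iff_ne_zero.2 (Nat.succ_ne_zero m)
    push_cast
    push_cast at this
    nlinarith
  have hnR : (0:ℝ) < n := by exact_mod_cast hn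
  set lam : ℝ := Real.sqrt (2 * L / n) with hlamdef
  have hlam : 0 < lam := Real.sqrt_pos.2 (by positivity)
  have hlam2 : lam^2 = 2 * L / n := Real.sq_sqrt (by positivity)
  set W : (Fin n → Bool) → ℝ := fun σ =>
    ∑ j, (Real.exp (lam * Avec a j σ) + Real.exp (-(lam * Avec a j σ))) with hWdef
  have hWpos : ∀ σ, 0 < W σ := fun σ =>
    Finset.sum_pos (fun j _ => by positivity) univ_nonempty
  -- step 1
  have step1 : ∀ σ, M0 a σ ≤ lam⁻¹ * Real.log (W σ) := by
    intro σ
    have hexp : Real.exp (lam * M0 a σ) ≤ W σ := by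
      obtain ⟨j, hj, hje⟩ := Finset.exists_mem_eq_sup' (univ_nonempty)
        (fun j => |Avec a j σ|)
      have hM : M0 a σ = |Avec a j σ| := hje
      have h1 : Real.exp (lam * |Avec a j σ|)
          ≤ Real.exp (lam * Avec a j σ) + Real.exp (-(lam * Avec a j σ)) := by
        rcases abs_cases (Avec a j σ) with ⟨h, _⟩ | ⟨h, _⟩
        · rw [h]; exact le_add_of_nonneg_right (Real.exp_pos _).le
        · rw [h, mul_neg, ← neg_mul] -- lam * -A = -(lam*A)
          exact le_add_of_nonneg_left (Real.exp_pos _).le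
      calc Real.exp (lam * M0 a σ) = Real.exp (lam * |Avec a j σ|) := by rw [hM]
        _ ≤ Real.exp (lam * Avec a j σ) + Real.exp (-(lam * Avec a j σ)) := h1
        _ ≤ W σ := Finset.single_le_sum (f := fun j =>
              Real.exp (lam * Avec a j σ) + Real.exp (-(lam * Avec a j σ)))
              (fun j _ => by positivity) (Finset.mem_univ j)
    have hlog : lam * M0 a σ ≤ Real.log (W σ) :=
      (Real.le_log_iff_exp_le (hWpos σ)).2 hexp
    calc M0 a σ = lam⁻¹ * (lam * M0 a σ) := by field_simp
      _ ≤ lam⁻¹ * Real.log (W σ) :=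
          mul_le_mul_of_nonneg_left hlog (inv_nonneg.2 hlam.le)
  -- step 2 : Jensen
  have card2 : (Fintype.card (Fin n → Bool) : ℝ) = 2^n := by
    simp [Fintype.card_fun]
  have step2 : ∑ σ : Fin n → Bool, Real.log (W σ)
      ≤ 2^n * Real.log ((2^n : ℝ)⁻¹ * ∑ σ : Fin n → Bool, W σ) := by
    have hjen := (strictConcaveOn_log_Ioi.concaveOn).le_map_sum
      (t := (univ : Finset (Fin n → Bool)))
      (w := fun _ => ((2:ℝ)^n)⁻¹) (p := W)
      (fun _ _ => by positivity)
      (by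
        rw [Finset.sum_const, Finset.card_univ, nsmul_eq_mul, card2]
        field_simp)
      (fun σ _ => hWpos σ)
    simp only [smul_eq_mul] at hjen
    rw [← Finset.mul_sum, ← Finset.mul_sum] at hjen
    have hpow : (0:ℝ) < 2^n := by positivity
    calc ∑ σ : Fin n → Bool, Real.log (W σ)
        = 2^n * (((2:ℝ)^n)⁻¹ * ∑ σ : Fin n → Bool, Real.log (W σ)) := by field_simp
      _ ≤ 2^n * Real.log ((2^n : ℝ)⁻¹ * ∑ σ : Fin n → Bool, W σ) := by
          exact mul_le_mul_of_nonneg_left hjen hpow.le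
  -- step 3
  have step3 : ∑ σ : Fin n → Bool, W σ
      ≤ 2^n * ((2*(m+1)) * Real.exp (lam^2 * n / 2)) := by
    rw [hWdef]
    rw [Finset.sum_comm]
    have hj : ∀ j : Fin (m+1),
        ∑ σ : Fin n → Bool,
          (Real.exp (lam * Avec a j σ) + Real.exp (-(lam * Avec a j σ)))
        ≤ 2 * (2^n * Real.exp (lam^2 * n / 2)) := by
      intro j
      rw [Finset.sum_add_distrib]
      have h1 : ∑ σ : Fin n → Bool, Real.exp (lam * Avec a j σ)
          ≤ 2^n * Real.exp (lam^2 * n / 2) := by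
        simpa only [Avec] using mgf_bound (a j) (ha j) lam
      have h2 : ∑ σ : Fin n → Bool, Real.exp (-(lam * Avec a j σ))
          ≤ 2^n * Real.exp (lam^2 * n / 2) := by
        have := mgf_bound (a j) (ha j) (-lam)
        simp only [Avec, neg_mul, neg_sq] at this ⊢
        exact this
      linarith
    calc ∑ j, ∑ σ : Fin n → Bool,
          (Real.exp (lam * Avec a j σ) + Real.exp (-(lam * Avec a j σ)))
        ≤ ∑ _j : Fin (m+1), 2 * (2^n * Real.exp (lam^2 * n / 2)) :=
          Finset.sum_le_sum fun j _ => hj j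
      _ = (m+1) * (2 * (2^n * Real.exp (lam^2 * n / 2))) := by
          rw [Finset.sum_const, Finset.card_univ, Fintype.card_fin, nsmul_eq_mul]
          push_cast; ring
      _ = 2^n * ((2*(m+1)) * Real.exp (lam^2 * n / 2)) := by push_cast; ring
  -- combine
  have hpow : (0:ℝ) < 2^n := by positivity
  have hWsumpos : 0 < ∑ σ : Fin n → Bool, W σ :=
    Finset.sum_pos (fun σ _ => hWpos σ) univ_nonempty
  have hlog3 : Real.log ((2^n : ℝ)⁻¹ * ∑ σ : Fin n → Bool, W σ)
      ≤ L + lam^2 * n / 2 := by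
    have hle : (2^n : ℝ)⁻¹ * ∑ σ : Fin n → Bool, W σ
        ≤ (2*(m+1)) * Real.exp (lam^2 * n / 2) := by
      have h := mul_le_mul_of_nonneg_left step3 (inv_nonneg.2 hpow.le)
      calc (2^n:ℝ)⁻¹ * ∑ σ : Fin n → Bool, W σ
          ≤ (2^n:ℝ)⁻¹ * (2^n * ((2*(m+1)) * Real.exp (lam^2 * n / 2))) := h
        _ = (2*(m+1)) * Real.exp (lam^2 * n / 2) := by field_simp
    have hposl : (0:ℝ) < (2^n : ℝ)⁻¹ * ∑ σ : Fin n → Bool, W σ :=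
      mul_pos (inv_pos.2 hpow) hWsumpos
    calc Real.log ((2^n : ℝ)⁻¹ * ∑ σ : Fin n → Bool, W σ)
        ≤ Real.log ((2*(m+1)) * Real.exp (lam^2 * n / 2)) := Real.log_le_log hposl hle
      _ = L + lam^2 * n / 2 := by
          rw [Real.log_mul (by positivity) (Real.exp_ne_zero _), Real.log_exp]
  have h2L : L = lam^2 * n / 2 := by
    rw [hlam2]; field_simp
  calc ∑ σ : Fin n → Bool, M0 a σ
      ≤ ∑ σ : Fin n → Bool, lam⁻¹ * Real.log (W σ) := Finset.sum_le_sum fun σ _ => step1 σ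
    _ = lam⁻¹ * ∑ σ : Fin n → Bool, Real.log (W σ) := by rw [Finset.mul_sum]
    _ ≤ lam⁻¹ * (2^n * Real.log ((2^n : ℝ)⁻¹ * ∑ σ : Fin n → Bool, W σ)) := by
        apply mul_le_mul_of_nonneg_left step2 (inv_nonneg.2 hlam.le)
    _ ≤ lam⁻¹ * (2^n * (L + lam^2 * n / 2)) := by
        apply mul_le_mul_of_nonneg_left _ (inv_nonneg.2 hlam.le)
        exact mul_le_mul_of_nonneg_left hlog3 hpow.le
    _ = 2^n * (n * lam) := by
        rw [h2L]
        have : lam ≠ 0 := hlam.ne'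
        field_simp
        ring
  done

lemma orth_pair {i i' : Fin n} (h : i ≠ i') :
    ∑ σ : Fin n → Bool, eps (σ i) * eps (σ i') = 0 := by
  classical
  set τ : (Fin n → Bool) → (Fin n → Bool) := fun σ => Function.update σ i (!(σ i)) with hτ
  have hinv : Function.Involutive τ := by
    intro σ; funext j
    by_cases hj : j = i
    · subst hj; simp [hτ]
    · simp [hτ, Function.update_of_ne hj]
  have hsum := Equiv.sum_comp (Function.Involutive.toPerm τ hinv)
    (fun σ => eps (σ i) * eps (σ i'))
  have hneg : ∀ σ : Fin n → Bool,
      eps ((Function.Involutive.toPerm τ hinv) σ i) * eps ((Function.Involutive.toPerm τ hinv) σ i')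
        = -(eps (σ i) * eps (σ i')) := by
    intro σ
    have h1 : (Function.Involutive.toPerm τ hinv) σ i = !(σ i) := by
      simp [Function.Involutive.toPerm, hτ]
    have h2 : (Function.Involutive.toPerm τ hinv) σ i' = σ i' := by
      simp [Function.Involutive.toPerm, hτ, Function.update_of_ne (Ne.symm h)]
    rw [h1, h2, eps_not]; ring
  rw [Finset.sum_congr rfl (fun σ _ => hneg σ)] at hsum
  rw [Finset.sum_neg_distrib] at hsum
  linarith

lemma orth_sq (a : Fin n → ℝ) :
    ∑ σ : Fin n → Bool, (∑ i, eps (σ i) * a i)^2 = 2^n * ∑ i, (a i)^2 := by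
  classical
  have expand : ∀ σ : Fin n → Bool, (∑ i, eps (σ i) * a i)^2
      = ∑ i, ∑ i', (eps (σ i) * eps (σ i')) * (a i * a i') := by
    intro σ
    rw [sq, Finset.sum_mul_sum]
    exact Finset.sum_congr rfl fun i _ => Finset.sum_congr rfl fun i' _ => by ring
  rw [Finset.sum_congr rfl fun σ _ => expand σ]
  rw [Finset.sum_comm]
  have hswap : ∀ i : Fin n, ∑ σ : Fin n → Bool, ∑ i', (eps (σ i) * eps (σ i')) * (a i * a i')
      = ∑ i', (∑ σ : Fin n → Bool, eps (σ i) * eps (σ i')) * (a i * a i') := by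
    intro i
    rw [Finset.sum_comm]
    exact Finset.sum_congr rfl fun i' _ => by rw [Finset.sum_mul]
  rw [Finset.sum_congr rfl fun i _ => hswap i]
  have hdiag : ∀ i : Fin n, ∑ i', (∑ σ : Fin n → Bool, eps (σ i) * eps (σ i')) * (a i * a i')
      = 2^n * (a i)^2 := by
    intro i
    rw [Finset.sum_eq_single i]
    · have : ∑ σ : Fin n → Bool, eps (σ i) * eps (σ i) = 2^n := by
        rw [Finset.sum_congr rfl (fun σ _ => eps_mul_self (σ i))]
        rw [Finset.sum_const, Finset.card_univ, nsmul_eq_mul]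
        simp [Fintype.card_fun]
      rw [this]; ring
    · intro i' _ hne
      rw [orth_pair (Ne.symm hne)]; ring
    · intro h; exact absurd (Finset.mem_univ i) h
  rw [Finset.sum_congr rfl fun i _ => hdiag i]
  rw [← Finset.mul_sum]

lemma cs_bound (m : ℕ) (a : Fin (m+1) → Fin n → ℝ) (ha : ∀ j i, |a j i| ≤ 1) :
    ∑ σ : Fin n → Bool, M0 a σ ≤ 2^n * Real.sqrt ((m+1) * n) := by
  classical
  set S2 : (Fin n → Bool) → ℝ := fun σ => ∑ j, (Avec a j σ)^2 with hS2
  have hS2nn : ∀ σ, 0 ≤ S2 σ := fun σ => Finset.sum_nonneg fun j _ => sq_nonneg _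
  have h1 : ∀ σ, M0 a σ ≤ Real.sqrt (S2 σ) := by
    intro σ
    unfold M0
    apply Finset.sup'_le
    intro j _
    rw [← Real.sqrt_sq_eq_abs]
    apply Real.sqrt_le_sqrt
    exact Finset.single_le_sum (f := fun j => (Avec a j σ)^2)
      (fun j _ => sq_nonneg _) (Finset.mem_univ j)
  have h2 : (∑ σ : Fin n → Bool, Real.sqrt (S2 σ))^2
      ≤ 2^n * ∑ σ : Fin n → Bool, S2 σ := by
    have := sq_sum_le_card_mul_sum_sq (s := (univ : Finset (Fin n → Bool)))
      (f := fun σ => Real.sqrt (S2 σ))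
    rw [Finset.card_univ] at this
    have hcard : ((Fintype.card (Fin n → Bool)) : ℝ) = 2^n := by simp [Fintype.card_fun]
    calc (∑ σ : Fin n → Bool, Real.sqrt (S2 σ))^2
        ≤ (Fintype.card (Fin n → Bool) : ℝ) * ∑ σ : Fin n → Bool, (Real.sqrt (S2 σ))^2 := this
      _ = 2^n * ∑ σ : Fin n → Bool, S2 σ := by
          rw [hcard]
          congr 1
          exact Finset.sum_congr rfl fun σ _ => Real.sq_sqrt (hS2nn σ)
  have h3 : ∑ σ : Fin n → Bool, S2 σ ≤ 2^n * ((m+1) * n) := by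
    rw [hS2]
    rw [Finset.sum_comm]
    have hj : ∀ j : Fin (m+1), ∑ σ : Fin n → Bool, (Avec a j σ)^2 ≤ 2^n * n := by
      intro j
      have horth := orth_sq (a j)
      simp only [Avec]
      rw [horth]
      have hstep : ∀ i : Fin n, (a j i)^2 ≤ 1 := fun i => by
        nlinarith [ha j i, abs_nonneg (a j i), sq_abs (a j i)]
      have hb : ∑ i, (a j i)^2 ≤ (n : ℝ) := by
        calc ∑ i, (a j i)^2 ≤ ∑ _i : Fin n, (1:ℝ) := Finset.sum_le_sum fun i _ => hstep i
          _ = n := by simp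
      exact mul_le_mul_of_nonneg_left hb (by positivity)
    calc ∑ j, ∑ σ : Fin n → Bool, (Avec a j σ)^2 ≤ ∑ _j : Fin (m+1), (2:ℝ)^n * n :=
        Finset.sum_le_sum fun j _ => hj j
      _ = 2^n * ((m+1) * n) := by
          rw [Finset.sum_const, Finset.card_univ, Fintype.card_fin, nsmul_eq_mul]
          push_cast; ring
  have hsqsum : 0 ≤ ∑ σ : Fin n → Bool, Real.sqrt (S2 σ) :=
    Finset.sum_nonneg fun σ _ => Real.sqrt_nonneg _
  calc ∑ σ : Fin n → Bool, M0 a σ ≤ ∑ σ : Fin n → Bool, Real.sqrt (S2 σ) :=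
      Finset.sum_le_sum fun σ _ => h1 σ
    _ = Real.sqrt ((∑ σ : Fin n → Bool, Real.sqrt (S2 σ))^2) :=
        (Real.sqrt_sq hsqsum).symm
    _ ≤ Real.sqrt ((2^n)^2 * ((m+1) * n)) := by
        apply Real.sqrt_le_sqrt
        calc (∑ σ : Fin n → Bool, Real.sqrt (S2 σ))^2
            ≤ 2^n * ∑ σ : Fin n → Bool, S2 σ := h2
          _ ≤ 2^n * (2^n * ((m+1) * n)) := mul_le_mul_of_nonneg_left h3 (by positivity)
          _ = (2^n)^2 * ((m+1) * n) := by ring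
    _ = 2^n * Real.sqrt ((m+1) * n) := by
        rw [Real.sqrt_mul (by positivity), Real.sqrt_sq (by positivity)]

end Massart



section Network

variable {d n : ℕ}

def Ball (d : ℕ) : Type := {p : (Fin d → ℝ) × ℝ // (∑ j, |p.1 j|) + |p.2| ≤ 1}

instance : Nonempty (Ball d) := ⟨⟨((fun _ => 0), 0), by simp⟩⟩

noncomputable def lin (x : Fin n → Fin d → ℝ) (θ : Ball d) (i : Fin n) : ℝ :=
  (∑ j, θ.1.1 j * x i j) + θ.1.2

noncomputable def coords (x : Fin n → Fin d → ℝ) : Fin (d+1) → Fin n → ℝ :=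
  fun j i => if h : (j : ℕ) < d then x i ⟨j, h⟩ else 1

lemma coords_abs_le (x : Fin n → Fin d → ℝ) (hx01 : ∀ i j, 0 ≤ x i j ∧ x i j ≤ 1) :
    ∀ (j : Fin (d+1)) i, |coords x j i| ≤ 1 := by
  intro j i
  unfold coords
  split
  · next h => rcases hx01 i ⟨j, h⟩ with ⟨h0, h1⟩; rw [abs_of_nonneg h0]; exact h1
  · simp

lemma coords_castSucc (x : Fin n → Fin d → ℝ) (j : Fin d) (i : Fin n) :
    coords x (Fin.castSucc j) i = x i j := by
  unfold coords
  rw [dif_pos (by simpa using j.isLt)]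
  congr 1


lemma coords_last (x : Fin n → Fin d → ℝ) (i : Fin n) :
    coords x (Fin.last d) i = 1 := by
  unfold coords
  rw [dif_neg (by simp)]

lemma lin_abs_le (x : Fin n → Fin d → ℝ) (hx01 : ∀ i j, 0 ≤ x i j ∧ x i j ≤ 1)
    (θ : Ball d) (i : Fin n) : |lin x θ i| ≤ 1 := by
  unfold lin
  calc |(∑ j, θ.1.1 j * x i j) + θ.1.2|
      ≤ |∑ j, θ.1.1 j * x i j| + |θ.1.2| := abs_add_le _ _
    _ ≤ (∑ j, |θ.1.1 j * x i j|) + |θ.1.2| :=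
        add_le_add_left (Finset.abs_sum_le_sum_abs _ _) _
    _ ≤ (∑ j, |θ.1.1 j|) + |θ.1.2| := by
        refine add_le_add_left (Finset.sum_le_sum fun j _ => ?_) _
        rw [abs_mul]
        rcases hx01 i j with ⟨h0, h1⟩
        nlinarith [abs_nonneg (θ.1.1 j), abs_of_nonneg h0]
    _ ≤ 1 := θ.2

end Network

section Network2

variable {d n : ℕ}

lemma sum_eps_lin (x : Fin n → Fin d → ℝ) (σ : Fin n → Bool) (θ : Ball d) :
    ∑ i, eps (σ i) * lin x θ i
      = (∑ j, θ.1.1 j * ∑ i, eps (σ i) * x i j) + θ.1.2 * ∑ i, eps (σ i) := by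
  calc ∑ i, eps (σ i) * lin x θ i
      = ∑ i, ((∑ j, θ.1.1 j * (eps (σ i) * x i j)) + θ.1.2 * eps (σ i)) := by
        refine Finset.sum_congr rfl fun i _ => ?_
        unfold lin
        rw [mul_add, Finset.mul_sum]
        congr 1
        · exact Finset.sum_congr rfl fun j _ => by ring
        · ring
    _ = (∑ j, θ.1.1 j * ∑ i, eps (σ i) * x i j) + θ.1.2 * ∑ i, eps (σ i) := by
        rw [Finset.sum_add_distrib]
        congr 1
        · rw [Finset.sum_comm]
          exact Finset.sum_congr rfl fun j _ => by rw [Finset.mul_sum]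
        · rw [Finset.mul_sum]

lemma abs_sum_eps_lin_le (x : Fin n → Fin d → ℝ) (σ : Fin n → Bool) (θ : Ball d) :
    |∑ i, eps (σ i) * lin x θ i| ≤ M0 (coords x) σ := by
  have hM0 : 0 ≤ M0 (coords x) σ := M0_nonneg _ _
  have h1 : ∀ j : Fin d, |∑ i, eps (σ i) * x i j| ≤ M0 (coords x) σ := by
    intro j
    have h := abs_Avec_le_M0 (coords x) (Fin.castSucc j) σ
    unfold Avec at h
    simpa only [coords_castSucc] using h
  have h0 : |∑ i, eps (σ i)| ≤ M0 (coords x) σ := by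
    have h := abs_Avec_le_M0 (coords x) (Fin.last d) σ
    unfold Avec at h
    simpa only [coords_last, mul_one] using h
  rw [sum_eps_lin]
  calc |(∑ j, θ.1.1 j * ∑ i, eps (σ i) * x i j) + θ.1.2 * ∑ i, eps (σ i)|
      ≤ |∑ j, θ.1.1 j * ∑ i, eps (σ i) * x i j| + |θ.1.2 * ∑ i, eps (σ i)| := abs_add_le _ _
    _ ≤ (∑ j, |θ.1.1 j| * |∑ i, eps (σ i) * x i j|) + |θ.1.2| * |∑ i, eps (σ i)| := by
        refine add_le_add ?_ (le_of_eq (abs_mul _ _))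
        refine le_trans (Finset.abs_sum_le_sum_abs _ _) ?_
        exact Finset.sum_le_sum fun j _ => le_of_eq (abs_mul _ _)
    _ ≤ (∑ j, |θ.1.1 j| * M0 (coords x) σ) + |θ.1.2| * M0 (coords x) σ := by
        refine add_le_add (Finset.sum_le_sum fun j _ => ?_) ?_
        · exact mul_le_mul_of_nonneg_left (h1 j) (abs_nonneg _)
        · exact mul_le_mul_of_nonneg_left h0 (abs_nonneg _)
    _ = ((∑ j, |θ.1.1 j|) + |θ.1.2|) * M0 (coords x) σ := by
        rw [add_mul, Finset.sum_mul]
    _ ≤ 1 * M0 (coords x) σ := mul_le_mul_of_nonneg_right θ.2 hM0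
    _ = M0 (coords x) σ := one_mul _

noncomputable def Psup (x : Fin n → Fin d → ℝ) (σ : Fin n → Bool) : ℝ :=
  ⨆ θ : Ball d, ∑ i, eps (σ i) * |lin x θ i|

lemma bddP (x : Fin n → Fin d → ℝ) (hx01 : ∀ i j, 0 ≤ x i j ∧ x i j ≤ 1) (σ : Fin n → Bool) :
    BddAbove (Set.range fun θ : Ball d => ∑ i, eps (σ i) * |lin x θ i|) := by
  refine ⟨(n:ℝ), ?_⟩
  rintro _ ⟨θ, rfl⟩
  have h := sum_eps_abs_le σ (fun i => |lin x θ i|)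
    (fun i => by rw [abs_abs]; exact lin_abs_le x hx01 θ i)
  exact le_of_abs_le h

lemma Psup_nonneg (x : Fin n → Fin d → ℝ) (hx01 : ∀ i j, 0 ≤ x i j ∧ x i j ≤ 1)
    (σ : Fin n → Bool) : 0 ≤ Psup x σ := by
  set θ₀ : Ball d := ⟨((fun _ => 0), 0), by simp⟩ with hθ₀
  have hv : ∑ i, eps (σ i) * |lin x θ₀ i| = 0 := by
    simp [lin, hθ₀]
  have hle := le_ciSup (bddP x hx01 σ) θ₀
  unfold Psup
  linarith [hle, hv.ge]

lemma le_Psup (x : Fin n → Fin d → ℝ) (hx01 : ∀ i j, 0 ≤ x i j ∧ x i j ≤ 1)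
    (σ : Fin n → Bool) (θ : Ball d) :
    ∑ i, eps (σ i) * |lin x θ i| ≤ Psup x σ :=
  le_ciSup (bddP x hx01 σ) θ

lemma max_eq_half (r : ℝ) : max r 0 = (r + |r|)/2 := by
  rcases le_total 0 r with h | h
  · rw [max_eq_left h, abs_of_nonneg h]; ring
  · rw [max_eq_right h, abs_of_nonpos h]; ring

lemma relu_pointwise (x : Fin n → Fin d → ℝ) (hx01 : ∀ i j, 0 ≤ x i j ∧ x i j ≤ 1)
    (σ : Fin n → Bool) (θ : Ball d) :
    |∑ i, eps (σ i) * max (lin x θ i) 0|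
      ≤ (M0 (coords x) σ + (Psup x σ + Psup x (fun i => !(σ i))))/2 := by
  have hsplit : ∑ i, eps (σ i) * max (lin x θ i) 0
      = ((∑ i, eps (σ i) * lin x θ i) + ∑ i, eps (σ i) * |lin x θ i|)/2 := by
    rw [← Finset.sum_add_distrib, Finset.sum_div]
    refine Finset.sum_congr rfl fun i _ => ?_
    rw [max_eq_half]; ring
  have h1 : |∑ i, eps (σ i) * lin x θ i| ≤ M0 (coords x) σ := abs_sum_eps_lin_le x σ θ
  have h2 : abs (∑ i, eps (σ i) * |lin x θ i|) ≤ Psup x σ + Psup x (fun i => !(σ i)) := by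
    have hup : ∑ i, eps (σ i) * |lin x θ i| ≤ Psup x σ := le_Psup x hx01 σ θ
    have hneg : -(∑ i, eps (σ i) * |lin x θ i|)
        = ∑ i, eps ((fun i => !(σ i)) i) * |lin x θ i| := by
      rw [← Finset.sum_neg_distrib]
      exact Finset.sum_congr rfl fun i _ => by rw [eps_not]; ring
    have hdn : -(∑ i, eps (σ i) * |lin x θ i|) ≤ Psup x (fun i => !(σ i)) := by
      rw [hneg]; exact le_Psup x hx01 _ θ
    have hP1 := Psup_nonneg x hx01 σ
    have hP2 := Psup_nonneg x hx01 (fun i => !(σ i))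
    rw [abs_le]; constructor <;> linarith
  rw [hsplit, abs_div, abs_two]
  have := abs_add_le (∑ i, eps (σ i) * lin x θ i) (∑ i, eps (σ i) * |lin x θ i|)
  linarith

lemma neuron_bound (x : Fin n → Fin d → ℝ) (σ : Fin n → Bool) (w : Fin d → ℝ) (c : ℝ)
    (U : ℝ) (hU0 : 0 ≤ U)
    (hU : ∀ θ : Ball d, |∑ i, eps (σ i) * max (lin x θ i) 0| ≤ U) :
    |∑ i, eps (σ i) * max ((∑ j, w j * x i j) + c) 0| ≤ ((∑ j, |w j|) + |c|) * U := by
  set aK : ℝ := (∑ j, |w j|) + |c| with haK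
  have hsum_nonneg : 0 ≤ ∑ j, |w j| := Finset.sum_nonneg fun j _ => abs_nonneg _
  have haK0 : 0 ≤ aK := by rw [haK]; positivity
  rcases eq_or_lt_of_le haK0 with h0 | hpos
  · -- aK = 0
    have hsum0 : (∑ j, |w j|) = 0 := by nlinarith [abs_nonneg c]
    have hc0 : c = 0 := by
      have : |c| = 0 := by nlinarith
      exact abs_eq_zero.mp this
    have hw : ∀ j ∈ (univ : Finset (Fin d)), |w j| = 0 :=
      (Finset.sum_eq_zero_iff_of_nonneg fun j _ => abs_nonneg _).mp hsum0
    have hz : ∀ i, (∑ j, w j * x i j) + c = 0 := by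
      intro i
      rw [hc0, add_zero]
      refine Finset.sum_eq_zero fun j _ => ?_
      rw [abs_eq_zero.mp (hw j (Finset.mem_univ j))]; ring
    have : ∑ i, eps (σ i) * max ((∑ j, w j * x i j) + c) 0 = 0 := by
      refine Finset.sum_eq_zero fun i _ => ?_
      rw [hz i]; simp
    rw [this, abs_zero, ← h0, zero_mul]
  · -- aK > 0
    have hmem : (∑ j, |w j / aK|) + |c / aK| ≤ 1 := by
      have heq : (∑ j, |w j / aK|) + |c / aK| = ((∑ j, |w j|) + |c|) / aK := by
        rw [add_div, Finset.sum_div]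
        congr 1
        · exact Finset.sum_congr rfl fun j _ => by
            rw [abs_div, abs_of_pos hpos]
        · rw [abs_div, abs_of_pos hpos]
      rw [heq, ← haK, div_self hpos.ne']
    set θ : Ball d := ⟨((fun j => w j / aK), c / aK), hmem⟩ with hθ
    have hlin : ∀ i, (∑ j, w j * x i j) + c = aK * lin x θ i := by
      intro i
      unfold lin
      rw [hθ]
      simp only
      rw [mul_add, Finset.mul_sum]
      congr 1
      · exact Finset.sum_congr rfl fun j _ => by field_simp
      · field_simp
    have hmax : ∀ i, max ((∑ j, w j * x i j) + c) 0 = aK * max (lin x θ i) 0 := by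
      intro i
      rw [hlin i, mul_max_of_nonneg _ _ haK0, mul_zero]
    calc |∑ i, eps (σ i) * max ((∑ j, w j * x i j) + c) 0|
        = |aK * ∑ i, eps (σ i) * max (lin x θ i) 0| := by
          rw [Finset.mul_sum]
          congr 1
          exact Finset.sum_congr rfl fun i _ => by rw [hmax i]; ring
      _ = aK * |∑ i, eps (σ i) * max (lin x θ i) 0| := by
          rw [abs_mul, abs_of_nonneg haK0]
      _ ≤ aK * U := mul_le_mul_of_nonneg_left (hU θ) haK0

lemma net_bound (x : Fin n → Fin d → ℝ) (σ : Fin n → Bool) (B U : ℝ) (hU0 : 0 ≤ U)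
    (hU : ∀ θ : Ball d, |∑ i, eps (σ i) * max (lin x θ i) 0| ≤ U)
    (m : ℕ) (b : Fin m → ℝ) (c : Fin m → ℝ) (w : Fin m → Fin d → ℝ)
    (hnorm : (m:ℝ)⁻¹ * ∑ k, |b k| * ((∑ j, |w k j|) + |c k|) ≤ B) :
    ∑ i, eps (σ i) * ((m:ℝ)⁻¹ * ∑ k, b k * max ((∑ j, w k j * x i j) + c k) 0) ≤ B * U := by
  have hm0 : (0:ℝ) ≤ (m:ℝ)⁻¹ := by positivity
  have hswap : ∑ i, eps (σ i) * ((m:ℝ)⁻¹ * ∑ k, b k * max ((∑ j, w k j * x i j) + c k) 0)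
      = (m:ℝ)⁻¹ * ∑ k, b k * ∑ i, eps (σ i) * max ((∑ j, w k j * x i j) + c k) 0 := by
    calc ∑ i, eps (σ i) * ((m:ℝ)⁻¹ * ∑ k, b k * max ((∑ j, w k j * x i j) + c k) 0)
        = ∑ i, ∑ k, (m:ℝ)⁻¹ * (b k * (eps (σ i) * max ((∑ j, w k j * x i j) + c k) 0)) := by
          refine Finset.sum_congr rfl fun i _ => ?_
          rw [Finset.mul_sum, Finset.mul_sum]
          exact Finset.sum_congr rfl fun k _ => by ring
      _ = ∑ k, ∑ i, (m:ℝ)⁻¹ * (b k * (eps (σ i) * max ((∑ j, w k j * x i j) + c k) 0)) :=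
          Finset.sum_comm
      _ = (m:ℝ)⁻¹ * ∑ k, b k * ∑ i, eps (σ i) * max ((∑ j, w k j * x i j) + c k) 0 := by
          rw [Finset.mul_sum]
          refine Finset.sum_congr rfl fun k _ => ?_
          simp only [Finset.mul_sum]
  rw [hswap]
  have hk : ∀ k ∈ (univ : Finset (Fin m)),
      b k * ∑ i, eps (σ i) * max ((∑ j, w k j * x i j) + c k) 0
        ≤ |b k| * (((∑ j, |w k j|) + |c k|) * U) := by
    intro k _
    calc b k * ∑ i, eps (σ i) * max ((∑ j, w k j * x i j) + c k) 0
        ≤ |b k * ∑ i, eps (σ i) * max ((∑ j, w k j * x i j) + c k) 0| := le_abs_self _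
      _ = |b k| * |∑ i, eps (σ i) * max ((∑ j, w k j * x i j) + c k) 0| := abs_mul _ _
      _ ≤ |b k| * (((∑ j, |w k j|) + |c k|) * U) :=
          mul_le_mul_of_nonneg_left (neuron_bound x σ (w k) (c k) U hU0 hU) (abs_nonneg _)
  calc (m:ℝ)⁻¹ * ∑ k, b k * ∑ i, eps (σ i) * max ((∑ j, w k j * x i j) + c k) 0
      ≤ (m:ℝ)⁻¹ * ∑ k, |b k| * (((∑ j, |w k j|) + |c k|) * U) :=
        mul_le_mul_of_nonneg_left (Finset.sum_le_sum hk) hm0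
    _ = ((m:ℝ)⁻¹ * ∑ k, |b k| * ((∑ j, |w k j|) + |c k|)) * U := by
        have : ∑ k, |b k| * (((∑ j, |w k j|) + |c k|) * U)
            = (∑ k, |b k| * ((∑ j, |w k j|) + |c k|)) * U := by
          rw [Finset.sum_mul]
          exact Finset.sum_congr rfl fun k _ => by ring
        rw [this, mul_assoc]
    _ ≤ B * U := mul_le_mul_of_nonneg_right hnorm hU0

lemma sqrt_compare {a b : ℝ} (ha : 0 ≤ a) (h : 9 * a ≤ 16 * b) :
    (3/2) * Real.sqrt a ≤ 2 * Real.sqrt b := by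
  have h94 : Real.sqrt (9/4) = 3/2 := by
    rw [show (9/4:ℝ) = (3/2)^2 by norm_num, Real.sqrt_sq (by norm_num : (0:ℝ) ≤ 3/2)]
  have h4 : Real.sqrt 4 = 2 := by
    rw [show (4:ℝ) = 2^2 by norm_num, Real.sqrt_sq (by norm_num : (0:ℝ) ≤ 2)]
  have h1 : (3/2) * Real.sqrt a = Real.sqrt ((9/4) * a) := by
    rw [Real.sqrt_mul (by norm_num : (0:ℝ) ≤ 9/4), h94]
  have h2 : 2 * Real.sqrt b = Real.sqrt (4 * b) := by
    rw [Real.sqrt_mul (by norm_num : (0:ℝ) ≤ 4), h4]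
  rw [h1, h2]
  exact Real.sqrt_le_sqrt (by linarith)

end Network2
section Final

variable {d n : ℕ}

noncomputable def Ubound (x : Fin n → Fin d → ℝ) (σ : Fin n → Bool) : ℝ :=
  (M0 (coords x) σ + (Psup x σ + Psup x (fun i => !(σ i))))/2

lemma Ubound_nonneg (x : Fin n → Fin d → ℝ) (hx01 : ∀ i j, 0 ≤ x i j ∧ x i j ≤ 1)
    (σ : Fin n → Bool) : 0 ≤ Ubound x σ := by
  have h1 := M0_nonneg (coords x) σ
  have h2 := Psup_nonneg x hx01 σ
  have h3 := Psup_nonneg x hx01 (fun i => !(σ i))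
  unfold Ubound
  linarith

lemma relu_le_Ubound (x : Fin n → Fin d → ℝ) (hx01 : ∀ i j, 0 ≤ x i j ∧ x i j ≤ 1)
    (σ : Fin n → Bool) (θ : Ball d) :
    |∑ i, eps (σ i) * max (lin x θ i) 0| ≤ Ubound x σ :=
  relu_pointwise x hx01 σ θ

lemma sum_Ubound (x : Fin n → Fin d → ℝ) (hx01 : ∀ i j, 0 ≤ x i j ∧ x i j ≤ 1) :
    ∑ σ : Fin n → Bool, Ubound x σ
      ≤ (3/2) * ∑ σ : Fin n → Bool, M0 (coords x) σ := by
  classical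
  have hPnot : ∑ σ : Fin n → Bool, Psup x (fun i => !(σ i))
      = ∑ σ : Fin n → Bool, Psup x σ := by
    have hinv : Function.Involutive (fun σ : Fin n → Bool => fun i => !(σ i)) :=
      fun σ => by funext i; simp
    have h := Equiv.sum_comp (Function.Involutive.toPerm _ hinv) (Psup x)
    simpa using h
  have hcontr : ∑ σ : Fin n → Bool, Psup x σ ≤ ∑ σ : Fin n → Bool, M0 (coords x) σ := by
    calc ∑ σ : Fin n → Bool, Psup x σ
        ≤ ∑ σ : Fin n → Bool, ⨆ θ : Ball d, ∑ i, eps (σ i) * lin x θ i := by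
          have h := contraction (lin x) (fun θ i => lin_abs_le x hx01 θ i)
          exact h
      _ ≤ ∑ σ : Fin n → Bool, M0 (coords x) σ :=
          Finset.sum_le_sum fun σ _ => ciSup_le fun θ =>
            le_trans (le_abs_self _) (abs_sum_eps_lin_le x σ θ)
  have hsplit : ∑ σ : Fin n → Bool, Ubound x σ
      = ((∑ σ : Fin n → Bool, M0 (coords x) σ)
          + ((∑ σ : Fin n → Bool, Psup x σ)
              + ∑ σ : Fin n → Bool, Psup x (fun i => !(σ i))))/2 := by
    unfold Ubound
    rw [← Finset.sum_div, Finset.sum_add_distrib, Finset.sum_add_distrib]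
  rw [hsplit, hPnot]
  linarith

lemma sqrt_div_n (n : ℕ) (hn : 0 < n) (a : ℝ) (ha : 0 ≤ a) :
    Real.sqrt (a * n) / n = Real.sqrt (a / n) := by
  have hnR : (0:ℝ) < n := by exact_mod_cast hn
  rw [show a / (n:ℝ) = (a * n) / ((n:ℝ)^2) by field_simp]
  rw [Real.sqrt_div (by positivity) ]
  rw [Real.sqrt_sq hnR.le]

lemma final_d1 (n : ℕ) (hn : 0 < n) (B : ℝ) (hB : 0 < B) (T : ℝ)
    (hT : T ≤ 2^n * Real.sqrt (2 * n)) (hT0 : 0 ≤ T) :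
    ((2:ℝ)^n)⁻¹ * ((n:ℝ)⁻¹ * (B * ((3/2) * T)))
      ≤ 2 * B * Real.sqrt (2 * Real.log 2 / n) := by
  have hnR : (0:ℝ) < n := by exact_mod_cast hn
  have hpow : (0:ℝ) < 2^n := by positivity
  have h1 : ((2:ℝ)^n)⁻¹ * ((n:ℝ)⁻¹ * (B * ((3/2) * T)))
      ≤ ((2:ℝ)^n)⁻¹ * ((n:ℝ)⁻¹ * (B * ((3/2) * (2^n * Real.sqrt (2 * n))))) := by
    have h2 : (3:ℝ)/2 * T ≤ (3/2) * (2^n * Real.sqrt (2*n)) := by linarith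
    have h3 : B * ((3:ℝ)/2 * T) ≤ B * ((3/2) * (2^n * Real.sqrt (2*n))) :=
      mul_le_mul_of_nonneg_left h2 hB.le
    exact mul_le_mul_of_nonneg_left
      (mul_le_mul_of_nonneg_left h3 (by positivity)) (by positivity)
  have h2 : ((2:ℝ)^n)⁻¹ * ((n:ℝ)⁻¹ * (B * ((3/2) * (2^n * Real.sqrt (2 * n)))))
      = B * ((3/2) * (Real.sqrt (2*n)/n)) := by
    field_simp
  have h3 : Real.sqrt (2*(n:ℝ))/n = Real.sqrt (2/n) := sqrt_div_n n hn 2 (by norm_num)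
  have h4 : (3/2) * Real.sqrt (2/(n:ℝ)) ≤ 2 * Real.sqrt (2 * Real.log 2 / n) := by
    refine sqrt_compare (by positivity) ?_
    have hlog := Real.log_two_gt_d9
    rw [show (9:ℝ) * (2/n) = 18/n by ring, show (16:ℝ) * (2*Real.log 2/n) = (32*Real.log 2)/n by ring]
    rw [div_le_div_iff_of_pos_right hnR]
    linarith
  calc ((2:ℝ)^n)⁻¹ * ((n:ℝ)⁻¹ * (B * ((3/2) * T)))
      ≤ B * ((3/2) * (Real.sqrt (2*n)/n)) := by rw [← h2]; exact h1
    _ = B * ((3/2) * Real.sqrt (2/n)) := by rw [h3]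
    _ ≤ B * (2 * Real.sqrt (2 * Real.log 2 / n)) :=
        mul_le_mul_of_nonneg_left h4 hB.le
    _ = 2 * B * Real.sqrt (2 * Real.log 2 / n) := by ring

lemma log_pow_ineq (d : ℕ) (hd2 : 2 ≤ d) :
    9 * Real.log (2*(d+1)) ≤ 16 * Real.log (2*d) := by
  have hdR : (2:ℝ) ≤ d := by exact_mod_cast hd2
  set y : ℝ := 2*(d:ℝ) with hy
  have hy4 : (4:ℝ) ≤ y := by rw [hy]; linarith
  have h1 : (2*((d:ℝ)+1))^9 ≤ y^16 := by
    calc (2*((d:ℝ)+1))^9 ≤ (2*y)^9 := by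
          refine pow_le_pow_left₀ (by positivity) ?_ 9
          rw [hy]; linarith
      _ = 2^9 * y^9 := by ring
      _ ≤ y^7 * y^9 := by
          refine mul_le_mul_of_nonneg_right ?_ (by positivity)
          calc (2:ℝ)^9 = 512 := by norm_num
            _ ≤ 4^7 := by norm_num
            _ ≤ y^7 := pow_le_pow_left₀ (by norm_num) hy4 7
      _ = y^16 := by ring
  have h2 : Real.log ((2*((d:ℝ)+1))^9) ≤ Real.log (y^16) :=
    Real.log_le_log (by positivity) h1
  rw [Real.log_pow, Real.log_pow] at h2
  push_cast at h2 ⊢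
  linarith

lemma final_dge2 (d n : ℕ) (hn : 0 < n) (hd2 : 2 ≤ d) (B : ℝ) (hB : 0 < B) (T : ℝ)
    (hT : T ≤ 2^n * ((n:ℝ) * Real.sqrt (2 * Real.log (2*(d+1)) / n))) (hT0 : 0 ≤ T) :
    ((2:ℝ)^n)⁻¹ * ((n:ℝ)⁻¹ * (B * ((3/2) * T)))
      ≤ 2 * B * Real.sqrt (2 * Real.log (2*d) / n) := by
  have hnR : (0:ℝ) < n := by exact_mod_cast hn
  have hpow : (0:ℝ) < 2^n := by positivity
  set lam : ℝ := Real.sqrt (2 * Real.log (2*(d+1)) / n) with hlam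
  have hlam0 : 0 ≤ lam := Real.sqrt_nonneg _
  have h1 : ((2:ℝ)^n)⁻¹ * ((n:ℝ)⁻¹ * (B * ((3/2) * T)))
      ≤ ((2:ℝ)^n)⁻¹ * ((n:ℝ)⁻¹ * (B * ((3/2) * (2^n * ((n:ℝ) * lam))))) := by
    have h2 : (3:ℝ)/2 * T ≤ (3/2) * (2^n * ((n:ℝ) * lam)) := by linarith
    have h3 : B * ((3:ℝ)/2 * T) ≤ B * ((3/2) * (2^n * ((n:ℝ) * lam))) :=
      mul_le_mul_of_nonneg_left h2 hB.le
    exact mul_le_mul_of_nonneg_left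
      (mul_le_mul_of_nonneg_left h3 (by positivity)) (by positivity)
  have h2 : ((2:ℝ)^n)⁻¹ * ((n:ℝ)⁻¹ * (B * ((3/2) * (2^n * ((n:ℝ) * lam)))))
      = B * ((3/2) * lam) := by
    field_simp
  have h4 : (3/2) * lam ≤ 2 * Real.sqrt (2 * Real.log (2*(d:ℝ)) / n) := by
    rw [hlam]
    have hlp : 0 ≤ Real.log (2*((d:ℝ)+1)) := by
      apply Real.log_nonneg
      have : (0:ℝ) ≤ d := by positivity
      linarith
    refine sqrt_compare (div_nonneg (by linarith) hnR.le) ?_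
    have hlog := log_pow_ineq d hd2
    have hlogpos : 0 ≤ Real.log (2*(d:ℝ)) := by
      apply Real.log_nonneg
      have : (1:ℝ) ≤ d := by exact_mod_cast le_trans (by norm_num) hd2
      linarith
    rw [show (9:ℝ) * (2 * Real.log (2*((d:ℝ)+1)) / n) = (18 * Real.log (2*((d:ℝ)+1)))/n by ring,
      show (16:ℝ) * (2 * Real.log (2*(d:ℝ)) / n) = (32 * Real.log (2*(d:ℝ)))/n by ring]
    rw [div_le_div_iff_of_pos_right hnR]
    push_cast at hlog
    linarith
  calc ((2:ℝ)^n)⁻¹ * ((n:ℝ)⁻¹ * (B * ((3/2) * T)))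
      ≤ B * ((3/2) * lam) := by rw [← h2]; exact h1
    _ ≤ B * (2 * Real.sqrt (2 * Real.log (2*(d:ℝ)) / n)) :=
        mul_le_mul_of_nonneg_left h4 hB.le
    _ = 2 * B * Real.sqrt (2 * Real.log (2*(d:ℝ)) / n) := by ring

end Final
end RadProof

open RadProof

/-- The empirical Rademacher complexity of the ℓ1-path-norm ball of
two-layer ReLU networks on any points `x_1, …, x_n ∈ [0,1]^d` is at most
`2B √(2 log(2d)/n)`.  The Rademacher expectation is written explicitly as the
uniform average over the `2^n` sign patterns. -/
theorem empirical_rademacher_pathNormBall_le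
    (d n : ℕ) (hd : 0 < d) (hn : 0 < n) (B : ℝ) (hB : 0 < B)
    (x : Fin n → Fin d → ℝ) (hx : ∀ i, x i ∈ Set.Icc (0 : Fin d → ℝ) 1) :
    ((2 : ℝ) ^ n)⁻¹ * ∑ σ : Fin n → Bool,
        ⨆ f : pathNormBall d B,
          (n : ℝ)⁻¹ * ∑ i, (if σ i then (1 : ℝ) else -1) * f.1 (x i)
      ≤ 2 * B * Real.sqrt (2 * Real.log (2 * d) / n) := by

  classical
  have hx01 : ∀ i j, 0 ≤ x i j ∧ x i j ≤ 1 := by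
    intro i j
    rcases hx i with ⟨h0, h1⟩
    exact ⟨h0 j, h1 j⟩
  have hmem0 : (fun _ : Fin d → ℝ => (0:ℝ)) ∈ pathNormBall d B := by
    refine ⟨1, le_refl 1, fun _ => 0, fun _ => 0, fun _ _ => 0, ?_, ?_⟩
    · funext y; simp
    · simp only [abs_zero, zero_mul, Finset.sum_const_zero, mul_zero]
      exact hB.le
  haveI hne : Nonempty (pathNormBall d B) := ⟨⟨_, hmem0⟩⟩
  simp only [show ∀ b : Bool, (if b then (1:ℝ) else -1) = eps b from fun b => rfl]
  have hstep1 : ∀ σ : Fin n → Bool,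
      (⨆ f : pathNormBall d B, (n : ℝ)⁻¹ * ∑ i, eps (σ i) * f.1 (x i))
        ≤ (n:ℝ)⁻¹ * (B * Ubound x σ) := by
    intro σ
    refine ciSup_le ?_
    rintro ⟨f, hf⟩
    obtain ⟨m, hm, b, c, w, rfl, hnorm⟩ := hf
    dsimp only
    refine mul_le_mul_of_nonneg_left ?_ (by positivity)
    exact net_bound x σ B (Ubound x σ) (Ubound_nonneg x hx01 σ)
      (fun θ => relu_le_Ubound x hx01 σ θ) m b c w hnorm
  have hU0 : ∀ σ : Fin n → Bool, 0 ≤ Ubound x σ := Ubound_nonneg x hx01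
  have hM0sum : 0 ≤ ∑ σ : Fin n → Bool, M0 (coords x) σ :=
    Finset.sum_nonneg fun σ _ => M0_nonneg _ _
  have hchain : ((2 : ℝ) ^ n)⁻¹ * ∑ σ : Fin n → Bool,
        (⨆ f : pathNormBall d B, (n : ℝ)⁻¹ * ∑ i, eps (σ i) * f.1 (x i))
      ≤ ((2:ℝ)^n)⁻¹ * ((n:ℝ)⁻¹ * (B * ((3/2) * ∑ σ : Fin n → Bool, M0 (coords x) σ))) := by
    calc ((2 : ℝ) ^ n)⁻¹ * ∑ σ : Fin n → Bool,
          (⨆ f : pathNormBall d B, (n : ℝ)⁻¹ * ∑ i, eps (σ i) * f.1 (x i))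
        ≤ ((2:ℝ)^n)⁻¹ * ∑ σ : Fin n → Bool, (n:ℝ)⁻¹ * (B * Ubound x σ) :=
          mul_le_mul_of_nonneg_left (Finset.sum_le_sum fun σ _ => hstep1 σ) (by positivity)
      _ = ((2:ℝ)^n)⁻¹ * ((n:ℝ)⁻¹ * (B * ∑ σ : Fin n → Bool, Ubound x σ)) := by
          rw [← Finset.mul_sum, ← Finset.mul_sum]
      _ ≤ ((2:ℝ)^n)⁻¹ * ((n:ℝ)⁻¹ * (B * ((3/2) * ∑ σ : Fin n → Bool, M0 (coords x) σ))) := by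
          refine mul_le_mul_of_nonneg_left ?_ (by positivity)
          refine mul_le_mul_of_nonneg_left ?_ (by positivity)
          exact mul_le_mul_of_nonneg_left (sum_Ubound x hx01) hB.le
  refine le_trans hchain ?_
  rcases Nat.lt_or_ge d 2 with hd2 | hd2
  · -- d = 1
    have hd1 : d = 1 := by omega
    subst hd1
    have hcs := cs_bound (n := n) 1 (coords x) (coords_abs_le x hx01)
    have hcs' : ∑ σ : Fin n → Bool, M0 (coords x) σ ≤ 2^n * Real.sqrt (2 * n) := by
      calc ∑ σ : Fin n → Bool, M0 (coords x) σ
          ≤ 2^n * Real.sqrt (((1:ℕ)+1) * n) := hcs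
        _ = 2^n * Real.sqrt (2 * n) := by norm_num
    have hfin := final_d1 n hn B hB _ hcs' hM0sum
    calc ((2:ℝ)^n)⁻¹ * ((n:ℝ)⁻¹ * (B * ((3/2) * ∑ σ : Fin n → Bool, M0 (coords x) σ)))
        ≤ 2 * B * Real.sqrt (2 * Real.log 2 / n) := hfin
      _ = 2 * B * Real.sqrt (2 * Real.log (2 * (1:ℕ)) / n) := by norm_num
  · -- d ≥ 2
    have hms := massart (n := n) d hn (coords x) (coords_abs_le x hx01)
    have hms' : ∑ σ : Fin n → Bool, M0 (coords x) σ
        ≤ 2^n * ((n:ℝ) * Real.sqrt (2 * Real.log (2*((d:ℝ)+1)) / n)) := by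
      calc ∑ σ : Fin n → Bool, M0 (coords x) σ
          ≤ 2^n * ((n:ℝ) * Real.sqrt (2 * Real.log (2*((d:ℕ)+1)) / n)) := hms
        _ = 2^n * ((n:ℝ) * Real.sqrt (2 * Real.log (2*((d:ℝ)+1)) / n)) := by push_cast; ring_nf
    exact final_dge2 d n hn hd2 B hB _ hms' hM0sum
end

section
/- Let S be a measurable space, A a finite set, H a positive integer, and for each h ∈ {1,…,H} let P_h be a Markov kernel from S × A to S and r_h : S × A → ℝ a bounded measurable reward, writing (P_h V)(s,a) = ∫_S V dP_h(s,a). Let π = (π_h) be a policy with π_h(·|s) a probability distribution on A, and define its value functions by V^π_{H+1} = 0, Q^π_h = r_h + P_h V^π_{h+1}, V^π_h(s) = Σ_{a ∈ A} π_h(a|s) Q^π_h(s,a). Let Q_h : S × A → ℝ and V_h : S → ℝ (h = 1,…,H+1) be arbitrary bounded measurable functions with V_{H+1} = 0, and set Γ_h = r_h + P_h V_{h+1} − Q_h. Then for any sequence (s_1, a_1, s_2, a_2, …, s_H, a_H, s_{H+1}) ∈ (S × A)^H × S, defining ζ¹_h = [V_h(s_h) − V^π_h(s_h)] − [Q_h(s_h,a_h)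 − Q^π_h(s_h,a_h)] and ζ²_h = [(P_h V_{h+1})(s_h,a_h) − (P_h V^π_{h+1})(s_h,a_h)] − [V_{h+1}(s_{h+1}) − V^π_{h+1}(s_{h+1})], the identity V_1(s_1) − V^π_1(s_1) = Σ_{h=1}^H (ζ¹_h + ζ²_h) − Σ_{h=1}^H Γ_h(s_h, a_h) holds. -/
open MeasureTheory ProbabilityTheory Finset

/-- Pointwise regret-decomposition identity along a trajectory:
with `ζ¹_h`, `ζ²_h` as below and `Γ_h = r_h + P_h V_{h+1} − Q_h` the
temporal-difference error, one has
`V_1(s_1) − V^π_1(s_1) = Σ_{h=1}^H (ζ¹_h + ζ²_h) − Σ_{h=1}^H Γ_h(s_h, a_h)`,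
where `(Q^π, V^π)` are the value functions of the policy `π`, characterized by the
Bellman equations. -/
theorem value_difference_decomposition
    {S A : Type*} [MeasurableSpace S] [MeasurableSpace A] [Fintype A]
    (H : ℕ) (hH : 1 ≤ H)
    (P : ℕ → Kernel (S × A) S) [∀ h, IsMarkovKernel (P h)]
    (r : ℕ → S × A → ℝ)
    (hrmeas : ∀ h, Measurable (r h)) (hrbdd : ∀ h, ∃ C : ℝ, ∀ p, |r h p| ≤ C)
    (π : ℕ → S → A → ℝ)
    (hπ0 : ∀ h s a, 0 ≤ π h s a) (hπ1 : ∀ h s, ∑ a, π h s a = 1)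
    (Qπ : ℕ → S × A → ℝ) (Vπ : ℕ → S → ℝ)
    (hVπtop : Vπ (H + 1) = 0)
    (hQπ : ∀ h ∈ Finset.Icc 1 H, ∀ p : S × A,
      Qπ h p = r h p + ∫ s', Vπ (h + 1) s' ∂(P h p))
    (hVπ : ∀ h ∈ Finset.Icc 1 H, ∀ s : S, Vπ h s = ∑ a, π h s a * Qπ h (s, a))
    (Q : ℕ → S × A → ℝ) (V : ℕ → S → ℝ)
    (hQmeas : ∀ h, Measurable (Q h)) (hQbdd : ∀ h, ∃ C : ℝ, ∀ p, |Q h p| ≤ C)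
    (hVmeas : ∀ h, Measurable (V h)) (hVbdd : ∀ h, ∃ C : ℝ, ∀ s, |V h s| ≤ C)
    (hVtop : V (H + 1) = 0)
    (s : ℕ → S) (a : ℕ → A) :
    V 1 (s 1) - Vπ 1 (s 1)
      = (∑ h ∈ Finset.Icc 1 H,
          (((V h (s h) - Vπ h (s h)) - (Q h (s h, a h) - Qπ h (s h, a h)))
            + (((∫ s', V (h + 1) s' ∂(P h (s h, a h)))
                  - (∫ s', Vπ (h + 1) s' ∂(P h (s h, a h))))
                - (V (h + 1) (s (h + 1)) - Vπ (h + 1) (s (h + 1))))))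
        - ∑ h ∈ Finset.Icc 1 H,
            (r h (s h, a h) + (∫ s', V (h + 1) s' ∂(P h (s h, a h)))
              - Q h (s h, a h)) := by
  set f : ℕ → ℝ := fun h => V h (s h) - Vπ h (s h) with hf
  have key : (∑ h ∈ Finset.Icc 1 H,
          (((V h (s h) - Vπ h (s h)) - (Q h (s h, a h) - Qπ h (s h, a h)))
            + (((∫ s', V (h + 1) s' ∂(P h (s h, a h)))
                  - (∫ s', Vπ (h + 1) s' ∂(P h (s h, a h))))
                - (V (h + 1) (s (h + 1)) - Vπ (h + 1) (s (h + 1))))))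
        - ∑ h ∈ Finset.Icc 1 H,
            (r h (s h, a h) + (∫ s', V (h + 1) s' ∂(P h (s h, a h)))
              - Q h (s h, a h))
      = ∑ h ∈ Finset.Icc 1 H, (f h - f (h + 1)) := by
    rw [← Finset.sum_sub_distrib]
    refine Finset.sum_congr rfl fun h hh => ?_
    have := hQπ h hh (s h, a h)
    simp only [hf]
    rw [this]
    ring
  rw [key, show Finset.Icc 1 H = Finset.Ico 1 (H + 1) from (Finset.Ico_add_one_right_eq_Icc 1 H).symm, Finset.sum_Ico_eq_sum_range]
  have tel : ∑ i ∈ Finset.range (H + 1 - 1), (f (1 + i) - f (1 + i + 1))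
      = f 1 - f (1 + (H + 1 - 1)) := by
    have := Finset.sum_range_sub' (fun i => f (1 + i)) (H + 1 - 1)
    simpa [add_assoc] using this
  rw [tel]
  have : 1 + (H + 1 - 1) = H + 1 := by omega
  rw [this]
  simp [hf, hVtop, hVπtop]
end

section
/- There exists a constant C > 0 depending only on c > 0 with the following property. Let F̃ be a class of real-valued functions on a set 𝒳, let x_1,…,x_n ∈ 𝒳, and let N ≥ 3 be such that for every ε' ∈ (0,1] there exists a finite subset of F̃ of cardinality at most exp( c · N · [ (log N)² + log(2/ε') ] ) that is an ε'-net of F̃ in the sup norm. Then for every ε ∈ (0, 1], the empirical Rademacher complexity of the localized class satisfies R̂_n( { f ∈ F̃ : (1/n) Σ_{i=1}^n f(x_i)² ≤ ε² }, X ) ≤ C · (ε/√n) · √( N · [ (log N)² + log(e/ε) ] ), where R̂_n(G, X) = E_ξ[ sup_{g ∈ G} (1/n) Σ_{i=1}^n ξ_i g(x_i) ] with ξ_i i.i.d. Rademacher variables. -/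
open Finset

universe u
set_option maxHeartbeats 1000000

open Finset

lemma sum_exp_prod {n : ℕ} (v : Fin n → ℝ) :
    ∑ σ : Fin n → Bool, Real.exp (∑ i, (if σ i then (1:ℝ) else -1) * v i)
      = ∏ i, (Real.exp (v i) + Real.exp (-v i)) := by
  have h : ∀ σ : Fin n → Bool, Real.exp (∑ i, (if σ i then (1:ℝ) else -1) * v i)
      = ∏ i, Real.exp ((if σ i then (1:ℝ) else -1) * v i) := by
    intro σ; rw [Real.exp_sum]
  simp_rw [h]
  have key := Finset.sum_prod_piFinset (ι := Fin n) (κ := Bool) (univ : Finset Bool)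
    (fun i b => Real.exp ((if b then (1:ℝ) else -1) * v i))
  rw [Fintype.piFinset_univ] at key
  rw [key]
  congr 1; funext i
  simp [Fintype.sum_bool]

lemma jensen_exp_avg {ι : Type*} [Fintype ι] [Nonempty ι] (g : ι → ℝ) :
    Real.exp ((Fintype.card ι : ℝ)⁻¹ * ∑ j, g j)
      ≤ (Fintype.card ι : ℝ)⁻¹ * ∑ j, Real.exp (g j) := by
  have hc : (0:ℝ) < Fintype.card ι := by
    exact_mod_cast Fintype.card_pos
  have hw : ∀ j ∈ Finset.univ (α := ι), (0:ℝ) ≤ (Fintype.card ι : ℝ)⁻¹ := by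
    intro _ _; positivity
  have hsum : ∑ _j : ι, (Fintype.card ι : ℝ)⁻¹ = 1 := by
    rw [Finset.sum_const, Finset.card_univ, nsmul_eq_mul, mul_inv_cancel₀ hc.ne']
  have := convexOn_exp.map_sum_le (t := Finset.univ) (w := fun _ => (Fintype.card ι : ℝ)⁻¹)
    (p := g) hw hsum (by intro i _; trivial)
  simpa [Finset.mul_sum, smul_eq_mul] using this

lemma massart_step {n : ℕ} (S : Finset (Fin n → ℝ)) (hS : S.Nonempty)
    (R lam : ℝ) (hlam : 0 < lam)
    (hnorm : ∀ v ∈ S, ∑ i, v i ^ 2 ≤ R ^ 2) :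
    ((2:ℝ)^n)⁻¹ * ∑ σ : Fin n → Bool,
        S.sup' hS (fun v => ∑ i, (if σ i then (1:ℝ) else -1) * v i)
      ≤ Real.log S.card / lam + lam * R ^ 2 / 2 := by
  set M : (Fin n → Bool) → ℝ :=
    fun σ => S.sup' hS (fun v => ∑ i, (if σ i then (1:ℝ) else -1) * v i) with hM
  have hcard : (Fintype.card (Fin n → Bool) : ℝ) = 2 ^ n := by
    simp [Fintype.card_fun]
  -- Jensen
  have j1 : Real.exp (((2:ℝ)^n)⁻¹ * ∑ σ, lam * M σ)
      ≤ ((2:ℝ)^n)⁻¹ * ∑ σ, Real.exp (lam * M σ) := by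
    have := jensen_exp_avg (ι := Fin n → Bool) (fun σ => lam * M σ)
    rwa [hcard] at this
  -- bound each exp(lam * M σ) by the sum over S
  have j2 : ∀ σ, Real.exp (lam * M σ)
      ≤ ∑ v ∈ S, Real.exp (∑ i, (if σ i then (1:ℝ) else -1) * (lam * v i)) := by
    intro σ
    obtain ⟨v₀, hv₀, he⟩ := Finset.exists_mem_eq_sup' hS
      (fun v => ∑ i, (if σ i then (1:ℝ) else -1) * v i)
    have : lam * M σ = ∑ i, (if σ i then (1:ℝ) else -1) * (lam * v₀ i) := by
      simp only [hM]; rw [he, Finset.mul_sum]; congr 1; funext i; ring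
    rw [this]
    apply Finset.single_le_sum _ hv₀
    intro v _
    exact (Real.exp_pos _).le
  -- factorize and bound by cosh
  have j3 : ∀ v ∈ S, ∑ σ : Fin n → Bool,
      Real.exp (∑ i, (if σ i then (1:ℝ) else -1) * (lam * v i))
        ≤ (2:ℝ)^n * Real.exp (lam ^ 2 * R ^ 2 / 2) := by
    intro v hv
    rw [sum_exp_prod (fun i => lam * v i)]
    have step : ∀ i : Fin n, Real.exp (lam * v i) + Real.exp (-(lam * v i))
        ≤ 2 * Real.exp ((lam * v i) ^ 2 / 2) := by
      intro i
      have h1 := Real.cosh_le_exp_half_sq (lam * v i)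
      have h2 : Real.cosh (lam * v i)
          = (Real.exp (lam * v i) + Real.exp (-(lam * v i))) / 2 := Real.cosh_eq _
      rw [h2] at h1; linarith
    calc ∏ i, (Real.exp (lam * v i) + Real.exp (-(lam * v i)))
        ≤ ∏ i, 2 * Real.exp ((lam * v i) ^ 2 / 2) := by
          apply Finset.prod_le_prod
          · intro i _; positivity
          · intro i _; exact step i
      _ = (2:ℝ)^n * Real.exp (∑ i, (lam * v i) ^ 2 / 2) := by
          rw [Finset.prod_mul_distrib, ← Real.exp_sum]
          simp [Finset.prod_const]
      _ ≤ (2:ℝ)^n * Real.exp (lam ^ 2 * R ^ 2 / 2) := by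
          apply mul_le_mul_of_nonneg_left _ (by positivity)
          apply Real.exp_le_exp.mpr
          have : ∑ i, (lam * v i) ^ 2 / 2 = lam ^ 2 * (∑ i, v i ^ 2) / 2 := by
            rw [Finset.mul_sum, Finset.sum_div]; congr 1; funext i; ring
          rw [this]
          have := hnorm v hv
          nlinarith [sq_nonneg lam]
  -- combine
  have key : Real.exp (lam * (((2:ℝ)^n)⁻¹ * ∑ σ, M σ))
      ≤ S.card * Real.exp (lam ^ 2 * R ^ 2 / 2) := by
    have e1 : lam * (((2:ℝ)^n)⁻¹ * ∑ σ, M σ) = ((2:ℝ)^n)⁻¹ * ∑ σ, lam * M σ := by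
      rw [show lam * (((2:ℝ)^n)⁻¹ * ∑ σ, M σ)
          = ((2:ℝ)^n)⁻¹ * (lam * ∑ σ, M σ) by ring, Finset.mul_sum]
    rw [e1]
    refine j1.trans ?_
    have e2 : ∑ σ : Fin n → Bool, Real.exp (lam * M σ)
        ≤ ∑ v ∈ S, ((2:ℝ)^n * Real.exp (lam ^ 2 * R ^ 2 / 2)) := by
      calc ∑ σ : Fin n → Bool, Real.exp (lam * M σ)
          ≤ ∑ σ : Fin n → Bool, ∑ v ∈ S,
              Real.exp (∑ i, (if σ i then (1:ℝ) else -1) * (lam * v i)) :=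
            Finset.sum_le_sum (fun σ _ => j2 σ)
        _ = ∑ v ∈ S, ∑ σ : Fin n → Bool,
              Real.exp (∑ i, (if σ i then (1:ℝ) else -1) * (lam * v i)) :=
            Finset.sum_comm
        _ ≤ ∑ v ∈ S, ((2:ℝ)^n * Real.exp (lam ^ 2 * R ^ 2 / 2)) :=
            Finset.sum_le_sum j3
    rw [Finset.sum_const, nsmul_eq_mul] at e2
    calc ((2:ℝ)^n)⁻¹ * ∑ σ, Real.exp (lam * M σ)
        ≤ ((2:ℝ)^n)⁻¹ * (S.card * ((2:ℝ)^n * Real.exp (lam ^ 2 * R ^ 2 / 2))) := by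
          apply mul_le_mul_of_nonneg_left e2 (by positivity)
      _ = S.card * Real.exp (lam ^ 2 * R ^ 2 / 2) := by
          field_simp
  -- take logs
  have hcardpos : (0:ℝ) < S.card := by exact_mod_cast Finset.card_pos.mpr hS
  have hlog := Real.log_le_log (Real.exp_pos _) key
  rw [Real.log_exp, Real.log_mul (ne_of_gt hcardpos) (ne_of_gt (Real.exp_pos _)),
    Real.log_exp] at hlog
  rw [← mul_le_mul_iff_right₀ hlam]
  calc lam * (((2:ℝ)^n)⁻¹ * ∑ σ, M σ) ≤ Real.log S.card + lam ^ 2 * R ^ 2 / 2 := hlog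
    _ = lam * (Real.log ↑S.card / lam + lam * R ^ 2 / 2) := by field_simp

lemma massart {n : ℕ} (S : Finset (Fin n → ℝ)) (hS : S.Nonempty)
    (R : ℝ) (hR : 0 ≤ R)
    (hnorm : ∀ v ∈ S, ∑ i, v i ^ 2 ≤ R ^ 2) :
    ((2:ℝ)^n)⁻¹ * ∑ σ : Fin n → Bool,
        S.sup' hS (fun v => ∑ i, (if σ i then (1:ℝ) else -1) * v i)
      ≤ R * Real.sqrt (2 * Real.log (2 * S.card)) := by
  have hcardpos : (0:ℝ) < S.card := by exact_mod_cast Finset.card_pos.mpr hS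
  have hL2 : (0:ℝ) < Real.log (2 * S.card) := by
    apply Real.log_pos
    have : (1:ℝ) ≤ S.card := by exact_mod_cast Finset.card_pos.mpr hS
    linarith
  set L := Real.log (2 * S.card) with hLdef
  rcases eq_or_lt_of_le hR with hR0 | hRpos
  · -- R = 0 : all vectors are zero
    have hzero : ∀ v ∈ S, ∀ i, v i = 0 := by
      intro v hv i
      have h1 := hnorm v hv
      rw [← hR0] at h1
      have h2 : ∀ j ∈ Finset.univ (α := Fin n), (0:ℝ) ≤ v j ^ 2 := fun j _ => sq_nonneg _
      have h3 : v i ^ 2 = 0 := by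
        have := Finset.sum_eq_zero_iff_of_nonneg h2
        have h4 : ∑ j, v j ^ 2 = 0 := le_antisymm (by simpa using h1) (Finset.sum_nonneg h2)
        exact (this.mp h4) i (Finset.mem_univ i)
      exact pow_eq_zero_iff (n := 2) (by norm_num) |>.mp h3
    have hM : ∀ σ : Fin n → Bool,
        S.sup' hS (fun v => ∑ i, (if σ i then (1:ℝ) else -1) * v i) = 0 := by
      intro σ
      apply le_antisymm
      · apply Finset.sup'_le
        intro v hv
        apply le_of_eq
        apply Finset.sum_eq_zero
        intro i _; rw [hzero v hv i, mul_zero]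
      · obtain ⟨v₀, hv₀⟩ := hS
        refine le_trans (le_of_eq ?_) (Finset.le_sup' _ hv₀)
        rw [Finset.sum_eq_zero]
        intro i _; rw [hzero v₀ hv₀ i, mul_zero]
    simp only [hM, Finset.sum_const, smul_zero, mul_zero]
    rw [← hR0]
    positivity
  · -- R > 0
    set lam := Real.sqrt (2 * L) / R with hlam
    have hsq : (0:ℝ) < Real.sqrt (2 * L) := Real.sqrt_pos.mpr (by linarith)
    have hlampos : 0 < lam := by positivity
    have := massart_step S hS R lam hlampos hnorm
    refine this.trans ?_
    have hlogcard : Real.log S.card ≤ L := by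
      rw [hLdef]
      apply Real.log_le_log hcardpos
      linarith
    have hss : Real.sqrt (2 * L) * Real.sqrt (2 * L) = 2 * L :=
      Real.mul_self_sqrt (by linarith)
    have e1 : L / lam + lam * R ^ 2 / 2 = R * Real.sqrt (2 * L) := by
      set s := Real.sqrt (2 * L) with hsdef
      rw [hlam]
      rw [div_div_eq_mul_div]
      rw [div_mul_eq_mul_div, div_div]
      rw [div_add_div _ _ (ne_of_gt hsq) (by positivity : (R*2:ℝ) ≠ 0)]
      rw [div_eq_iff (by positivity : s * (R*2) ≠ 0)]
      nlinarith [hss]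
    calc Real.log S.card / lam + lam * R ^ 2 / 2
        ≤ L / lam + lam * R ^ 2 / 2 := by
          refine add_le_add ?_ le_rfl
          exact (div_le_div_iff_of_pos_right hlampos).mpr hlogcard
      _ = R * Real.sqrt (2 * L) := e1

lemma sqrt_le_self' {x : ℝ} (hx : 1 ≤ x) : Real.sqrt x ≤ x := by
  have h := Real.sqrt_le_sqrt (by nlinarith : x ≤ x^2)
  rwa [Real.sqrt_sq (by linarith)] at h

lemma sum_geom_aux (n : ℕ) : ∑ k ∈ Finset.range n, ((k:ℝ)+2) * ((2:ℝ)^(k+1))⁻¹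
    = 3 - ((n:ℝ)+3) * ((2:ℝ)^n)⁻¹ := by
  induction n with
  | zero => norm_num
  | succ m ih =>
    rw [Finset.sum_range_succ, ih]
    have h2 : ((2:ℝ)^(m+1)) = 2^m * 2 := by rw [pow_succ]
    push_cast
    rw [h2]
    have hp : ((2:ℝ)^m) ≠ 0 := by positivity
    field_simp
    ring

lemma sum_sqrt_geom (n : ℕ) :
    ∑ k ∈ Finset.range n, Real.sqrt ((k:ℝ)+2) * ((2:ℝ)^(k+1))⁻¹ ≤ 3 := by
  have h1 : ∑ k ∈ Finset.range n, Real.sqrt ((k:ℝ)+2) * ((2:ℝ)^(k+1))⁻¹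
      ≤ ∑ k ∈ Finset.range n, ((k:ℝ)+2) * ((2:ℝ)^(k+1))⁻¹ := by
    apply Finset.sum_le_sum
    intro k _
    apply mul_le_mul_of_nonneg_right (sqrt_le_self' (by push_cast; linarith)) (by positivity)
  rw [sum_geom_aux] at h1
  have : 0 ≤ ((n:ℝ)+3) * ((2:ℝ)^n)⁻¹ := by positivity
  linarith

lemma log_two_le_one : Real.log 2 ≤ 1 := by
  have := Real.log_le_sub_one_of_pos (by norm_num : (0:ℝ) < 2)
  linarith

lemma rad_mul_le_abs (b : Bool) (a : ℝ) : (if b then (1:ℝ) else -1) * a ≤ |a| := by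
  cases b
  · simp only [Bool.false_eq_true, if_false]
    rw [neg_one_mul]
    exact neg_le_abs a
  · simp only [if_true, one_mul]
    exact le_abs_self a

lemma level0_norm {n : ℕ} (fx v : Fin n → ℝ) (ε : ℝ) (hε : 0 ≤ ε)
    (hf : ∑ i, fx i ^ 2 ≤ n * ε^2) (hclose : ∀ i, |fx i - v i| ≤ ε) :
    ∑ i, v i ^ 2 ≤ n * (2*ε)^2 := by
  set d : Fin n → ℝ := fun i => v i - fx i with hddef
  have hd : ∑ i, d i ^2 ≤ n * ε^2 := by
    have : ∀ i : Fin n, d i ^ 2 ≤ ε ^ 2 := by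
      intro i
      have h1 : |d i| ≤ ε := by rw [hddef]; simpa [abs_sub_comm] using hclose i
      calc d i ^2 = |d i|^2 := (sq_abs _).symm
        _ ≤ ε^2 := by apply pow_le_pow_left₀ (abs_nonneg _) h1
    calc ∑ i, d i ^2 ≤ ∑ _i : Fin n, ε^2 := Finset.sum_le_sum (fun i _ => this i)
      _ = n * ε^2 := by rw [Finset.sum_const]; simp [nsmul_eq_mul]
  have hcs : ∑ i, fx i * d i ≤ Real.sqrt (∑ i, fx i^2) * Real.sqrt (∑ i, d i^2) :=
    Real.sum_mul_le_sqrt_mul_sqrt _ _ _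
  have hs : Real.sqrt ((n:ℝ)*ε^2) * Real.sqrt ((n:ℝ)*ε^2) = n * ε^2 :=
    Real.mul_self_sqrt (by positivity)
  have hprod : ∑ i, fx i * d i ≤ (n:ℝ) * ε^2 := by
    calc ∑ i, fx i * d i ≤ Real.sqrt (∑ i, fx i^2) * Real.sqrt (∑ i, d i^2) := hcs
      _ ≤ Real.sqrt ((n:ℝ)*ε^2) * Real.sqrt ((n:ℝ)*ε^2) := by
          apply mul_le_mul (Real.sqrt_le_sqrt hf) (Real.sqrt_le_sqrt hd)
            (Real.sqrt_nonneg _) (Real.sqrt_nonneg _)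
      _ = (n:ℝ) * ε^2 := hs
  have expand : ∑ i, v i ^2 = ∑ i, fx i^2 + 2*(∑ i, fx i * d i) + ∑ i, d i^2 := by
    rw [Finset.mul_sum, ← Finset.sum_add_distrib, ← Finset.sum_add_distrib]
    apply Finset.sum_congr rfl
    intro i _
    have : v i = fx i + d i := by rw [hddef]; ring
    rw [this]; ring
  rw [expand]
  nlinarith


/-- Localized empirical Rademacher complexity bound via sup-norm
covering numbers of the form `exp(c·N·[(log N)² + log(2/ε')])` (as for sparse deep
ReLU networks): there is a constant `C` depending only on `c` such that for every
radius `ε ∈ (0,1]`, the empirical Rademacher complexity of the localized class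
`{f ∈ F̃ : (1/n) Σ f(x_i)² ≤ ε²}` is at most
`C (ε/√n) √(N[(log N)² + log(e/ε)])`. The Rademacher expectation is written as
the uniform average over the `2^n` sign patterns. -/
theorem localized_empirical_rademacher_of_covering :
    ∀ c : ℝ, 0 < c → ∃ C : ℝ, 0 < C ∧
      ∀ (𝒳 : Type u) (Ftil : Set (𝒳 → ℝ)) (n : ℕ), 1 ≤ n → ∀ (x : Fin n → 𝒳)
        (N : ℕ), 3 ≤ N →
        (∀ ε' : ℝ, ε' ∈ Set.Ioc (0 : ℝ) 1 →
          ∃ G : Finset (𝒳 → ℝ), ↑G ⊆ Ftil ∧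
            (G.card : ℝ) ≤ Real.exp (c * N * ((Real.log N) ^ 2 + Real.log (2 / ε'))) ∧
            ∀ f ∈ Ftil, ∃ g ∈ G, ∀ z, |f z - g z| ≤ ε') →
        ∀ ε : ℝ, ε ∈ Set.Ioc (0 : ℝ) 1 →
          ((2 : ℝ) ^ n)⁻¹ * ∑ σ : Fin n → Bool,
              ⨆ f : {f : 𝒳 → ℝ // f ∈ Ftil ∧ (n : ℝ)⁻¹ * ∑ i, (f (x i)) ^ 2 ≤ ε ^ 2},
                (n : ℝ)⁻¹ * ∑ i, (if σ i then (1 : ℝ) else -1) * f.1 (x i)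
            ≤ C * (ε / Real.sqrt n)
                * Real.sqrt (N * ((Real.log N) ^ 2 + Real.log (Real.exp 1 / ε))) := by
  intro c hc
  refine ⟨1 + 2*Real.sqrt (2*(1+c)) + 9*Real.sqrt (2*(1+2*c)), by positivity, ?_⟩
  intro 𝒳 Ftil n hn x N hN hcov ε hε
  obtain ⟨hε0, hε1⟩ := hε
  classical
  set A := (N:ℝ) * ((Real.log N)^2 + Real.log (Real.exp 1 / ε)) with hAdef
  -- basic facts
  have hnpos : (0:ℝ) < n := by exact_mod_cast Nat.lt_of_lt_of_le Nat.zero_lt_one hn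
  have hN3 : (3:ℝ) ≤ N := by exact_mod_cast hN
  have hlogN : 1 ≤ Real.log N := by
    have h1 : Real.exp 1 ≤ 3 := by have := Real.exp_one_lt_d9; linarith
    have h2 : Real.exp 1 ≤ (N:ℝ) := le_trans h1 hN3
    calc (1:ℝ) = Real.log (Real.exp 1) := (Real.log_exp 1).symm
      _ ≤ Real.log N := Real.log_le_log (Real.exp_pos 1) h2
  have hloge : 1 ≤ Real.log (Real.exp 1 / ε) := by
    rw [Real.log_div (Real.exp_ne_zero 1) (ne_of_gt hε0), Real.log_exp]
    have : Real.log ε ≤ 0 := Real.log_nonpos (le_of_lt hε0) hε1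
    linarith
  have hNA : (N:ℝ) ≤ A := by rw [hAdef]; nlinarith
  have hA1 : 1 ≤ A := by linarith
  have hApos : (0:ℝ) < A := by linarith
  have hsn : 0 < Real.sqrt n := Real.sqrt_pos.mpr hnpos
  have hsA : 0 < Real.sqrt A := Real.sqrt_pos.mpr hApos
  have hsA1 : 1 ≤ Real.sqrt A := by
    rw [show (1:ℝ) = Real.sqrt 1 by simp]
    exact Real.sqrt_le_sqrt hA1
  -- nets at all scales
  have hek_pos : ∀ k : ℕ, 0 < ε / 2^k := fun k => by positivity
  have hek_le : ∀ k : ℕ, ε / 2^k ≤ 1 := by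
    intro k
    have h1 : (1:ℝ) ≤ 2^k := one_le_pow₀ (by norm_num)
    rw [div_le_one (by positivity)]
    linarith
  have hnets : ∀ k : ℕ, ∃ G : Finset (𝒳 → ℝ), ↑G ⊆ Ftil ∧
      (G.card : ℝ) ≤ Real.exp (c * N * ((Real.log N)^2 + Real.log (2 / (ε / 2^k)))) ∧
      ∀ f ∈ Ftil, ∃ g ∈ G, ∀ z, |f z - g z| ≤ ε / 2^k :=
    fun k => hcov (ε / 2^k) ⟨hek_pos k, hek_le k⟩
  choose G hGsub hGcard hGnet using hnets
  choose gg hggmem hggclose using fun (k : ℕ) (f : 𝒳 → ℝ) (hf : f ∈ Ftil) => hGnet k f hf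
  -- covering number log bounds
  have hBk : ∀ k : ℕ, c * N * ((Real.log N)^2 + Real.log (2 / (ε / 2^k))) ≤ c * A * (1+k) := by
    intro k
    have e1 : Real.log (2 / (ε / 2^k)) = Real.log 2 + k * Real.log 2 - Real.log ε := by
      rw [Real.log_div (by norm_num) (ne_of_gt (hek_pos k)),
          Real.log_div (ne_of_gt hε0) (by positivity), Real.log_pow]
      ring
    have e2 : Real.log (2 / (ε / 2^k)) ≤ k + Real.log (Real.exp 1 / ε) := by
      rw [e1, Real.log_div (Real.exp_ne_zero 1) (ne_of_gt hε0), Real.log_exp]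
      have hl2 := log_two_le_one
      have hk0 : (0:ℝ) ≤ k := Nat.cast_nonneg k
      nlinarith
    have hk0 : (0:ℝ) ≤ k := Nat.cast_nonneg k
    calc c * N * ((Real.log N)^2 + Real.log (2 / (ε / 2^k)))
        ≤ c * N * ((Real.log N)^2 + Real.log (Real.exp 1 / ε) + k) := by
          apply mul_le_mul_of_nonneg_left _ (by positivity)
          linarith
      _ = c * (A + N * k) := by rw [hAdef]; ring
      _ ≤ c * (A + A * k) := by
          apply mul_le_mul_of_nonneg_left _ (le_of_lt hc)
          nlinarith
      _ = c * A * (1+k) := by ring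
  -- empty / nonempty localized class
  by_cases hne : Nonempty {f : 𝒳 → ℝ // f ∈ Ftil ∧ (n : ℝ)⁻¹ * ∑ i, (f (x i)) ^ 2 ≤ ε ^ 2}
  swap
  · haveI := not_nonempty_iff.mp hne
    simp only [Real.iSup_of_isEmpty, Finset.sum_const, smul_zero, mul_zero]
    positivity
  · obtain ⟨⟨f₀, hf₀, hloc₀⟩⟩ := hne
    have hlocsum : ∀ (f : 𝒳 → ℝ), ((n : ℝ)⁻¹ * ∑ i, (f (x i)) ^ 2 ≤ ε ^ 2) →
        ∑ i, (f (x i))^2 ≤ n * ε^2 := by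
      intro f h
      have h2 := mul_le_mul_of_nonneg_left h (le_of_lt hnpos)
      rw [← mul_assoc, mul_inv_cancel₀ (ne_of_gt hnpos), one_mul] at h2
      exact h2
    -- finite vector sets for chaining
    set S0 : Finset (Fin n → ℝ) :=
      ((G 0).image (fun g => fun i => g (x i))).filter
        (fun v => ∑ i, v i^2 ≤ n * (2*ε)^2) with hS0def
    set D : ℕ → Finset (Fin n → ℝ) := fun k =>
      (((G k) ×ˢ (G (k+1))).image (fun p => fun i => p.2 (x i) - p.1 (x i))).filter
        (fun v => ∑ i, v i^2 ≤ n * (3*(ε/2^(k+1)))^2) with hDdef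
    have hmem0 : ∀ (f : 𝒳 → ℝ) (hf : f ∈ Ftil), (∑ i, (f (x i))^2 ≤ n * ε^2) →
        (fun i => gg 0 f hf (x i)) ∈ S0 := by
      intro f hf hloc
      rw [hS0def, Finset.mem_filter]
      refine ⟨Finset.mem_image_of_mem _ (hggmem 0 f hf), ?_⟩
      apply level0_norm (fun i => f (x i)) _ ε (le_of_lt hε0) hloc
      intro i
      have h := hggclose 0 f hf (x i)
      simpa using h
    have hmemD : ∀ (k : ℕ) (f : 𝒳 → ℝ) (hf : f ∈ Ftil),
        (fun i => gg (k+1) f hf (x i) - gg k f hf (x i)) ∈ D k := by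
      intro k f hf
      rw [hDdef, Finset.mem_filter]
      constructor
      · have hp : (gg k f hf, gg (k+1) f hf) ∈ (G k) ×ˢ (G (k+1)) :=
          Finset.mem_product.mpr ⟨hggmem k f hf, hggmem (k+1) f hf⟩
        exact Finset.mem_image_of_mem _ hp
      · have hpt : ∀ i : Fin n, |gg (k+1) f hf (x i) - gg k f hf (x i)| ≤ 3*(ε/2^(k+1)) := by
          intro i
          have h1 := hggclose k f hf (x i)
          have h2 := hggclose (k+1) f hf (x i)
          have he : ε/2^k = 2*(ε/2^(k+1)) := by
            rw [pow_succ]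
            field_simp
          rw [abs_sub_comm] at h2
          calc |gg (k+1) f hf (x i) - gg k f hf (x i)|
              = |(gg (k+1) f hf (x i) - f (x i)) + (f (x i) - gg k f hf (x i))| := by
                rw [sub_add_sub_cancel]
            _ ≤ |gg (k+1) f hf (x i) - f (x i)| + |f (x i) - gg k f hf (x i)| := abs_add_le _ _
            _ ≤ ε/2^(k+1) + ε/2^k := add_le_add h2 h1
            _ = 3*(ε/2^(k+1)) := by rw [he]; ring
        calc ∑ i, (gg (k+1) f hf (x i) - gg k f hf (x i))^2
            ≤ ∑ _i : Fin n, (3*(ε/2^(k+1)))^2 := by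
              apply Finset.sum_le_sum
              intro i _
              calc (gg (k+1) f hf (x i) - gg k f hf (x i))^2
                  = |gg (k+1) f hf (x i) - gg k f hf (x i)|^2 := (sq_abs _).symm
                _ ≤ (3*(ε/2^(k+1)))^2 := by
                    apply pow_le_pow_left₀ (abs_nonneg _) (hpt i)
          _ = n * (3*(ε/2^(k+1)))^2 := by rw [Finset.sum_const]; simp [nsmul_eq_mul]
    have hf0sum : ∑ i, (f₀ (x i))^2 ≤ n * ε^2 := hlocsum f₀ hloc₀
    have hS0ne : S0.Nonempty := ⟨_, hmem0 f₀ hf₀ hf0sum⟩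
    have hDne : ∀ k, (D k).Nonempty := fun k => ⟨_, hmemD k f₀ hf₀⟩
    have hGnepos : ∀ k, (0:ℝ) < (G k).card := by
      intro k
      exact_mod_cast Finset.card_pos.mpr ⟨_, hggmem k f₀ hf₀⟩
    have hlogG : ∀ k, Real.log ((G k).card) ≤ c * A * (1+k) := by
      intro k
      calc Real.log ((G k).card)
          ≤ Real.log (Real.exp (c * N * ((Real.log N)^2 + Real.log (2 / (ε / 2^k))))) :=
            Real.log_le_log (hGnepos k) (hGcard k)
        _ = c * N * ((Real.log N)^2 + Real.log (2 / (ε / 2^k))) := Real.log_exp _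
        _ ≤ c * A * (1+k) := hBk k
    -- card/log bounds for the chaining sets
    have hS0cardpos : (0:ℝ) < S0.card := by exact_mod_cast Finset.card_pos.mpr hS0ne
    have hlogS0 : Real.log (2 * S0.card) ≤ (1+c) * A := by
      rw [Real.log_mul two_ne_zero (ne_of_gt hS0cardpos)]
      have hcardS0 : (S0.card : ℝ) ≤ ((G 0).card : ℝ) := by
        rw [hS0def]
        exact_mod_cast le_trans (Finset.card_filter_le _ _) Finset.card_image_le
      have h1 : Real.log (S0.card) ≤ Real.log ((G 0).card) :=
        Real.log_le_log hS0cardpos hcardS0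
      have h2 := hlogG 0
      have h3 := log_two_le_one
      push_cast at h2
      nlinarith
    have hlogD : ∀ k, Real.log (2 * (D k).card) ≤ (1+2*c) * A * (k+2) := by
      intro k
      have hDpos : (0:ℝ) < (D k).card := by exact_mod_cast Finset.card_pos.mpr (hDne k)
      rw [Real.log_mul two_ne_zero (ne_of_gt hDpos)]
      have hcardD : ((D k).card : ℝ) ≤ ((G k).card : ℝ) * ((G (k+1)).card : ℝ) := by
        have h1 : (D k).card ≤ ((G k) ×ˢ (G (k+1))).card := by
          rw [hDdef]
          exact le_trans (Finset.card_filter_le _ _) Finset.card_image_le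
        rw [Finset.card_product] at h1
        exact_mod_cast h1
      have h1 : Real.log ((D k).card) ≤ Real.log (((G k).card : ℝ) * ((G (k+1)).card : ℝ)) :=
        Real.log_le_log hDpos hcardD
      rw [Real.log_mul (ne_of_gt (hGnepos k)) (ne_of_gt (hGnepos (k+1)))] at h1
      have h2 := hlogG k
      have h3 := hlogG (k+1)
      push_cast at h3
      have hk0 : (0:ℝ) ≤ k := Nat.cast_nonneg k
      have h4 := log_two_le_one
      nlinarith [mul_pos hApos (show (0:ℝ) < (k:ℝ)+2 by linarith),
        mul_nonneg (mul_nonneg hc.le hApos.le) hk0]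
    -- Massart bounds
    have hmassart0 : ((2:ℝ)^n)⁻¹ * ∑ σ : Fin n → Bool,
        S0.sup' hS0ne (fun v => ∑ i, (if σ i then (1:ℝ) else -1) * v i)
        ≤ (2*ε*Real.sqrt n) * Real.sqrt (2 * Real.log (2*S0.card)) := by
      apply massart S0 hS0ne _ (by positivity)
      intro v hv
      rw [hS0def, Finset.mem_filter] at hv
      have hsq : (2*ε*Real.sqrt n)^2 = n * (2*ε)^2 := by
        rw [mul_pow, Real.sq_sqrt (le_of_lt hnpos)]
        ring
      rw [hsq]
      exact hv.2
    have hmassartD : ∀ k, ((2:ℝ)^n)⁻¹ * ∑ σ : Fin n → Bool,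
        (D k).sup' (hDne k) (fun v => ∑ i, (if σ i then (1:ℝ) else -1) * v i)
        ≤ (3*(ε/2^(k+1))*Real.sqrt n) * Real.sqrt (2 * Real.log (2*(D k).card)) := by
      intro k
      apply massart (D k) (hDne k) _ (by positivity)
      intro v hv
      rw [hDdef, Finset.mem_filter] at hv
      have hsq : (3*(ε/2^(k+1))*Real.sqrt n)^2 = n * (3*(ε/2^(k+1)))^2 := by
        rw [mul_pow, Real.sq_sqrt (le_of_lt hnpos)]
        ring
      rw [hsq]
      exact hv.2
    -- pointwise (per sign pattern) chaining bound
    haveI : Nonempty {f : 𝒳 → ℝ // f ∈ Ftil ∧ (n : ℝ)⁻¹ * ∑ i, (f (x i)) ^ 2 ≤ ε ^ 2} :=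
      ⟨⟨f₀, hf₀, hloc₀⟩⟩
    have hperσ : ∀ σ : Fin n → Bool,
        (⨆ f : {f : 𝒳 → ℝ // f ∈ Ftil ∧ (n : ℝ)⁻¹ * ∑ i, (f (x i)) ^ 2 ≤ ε ^ 2},
          (n : ℝ)⁻¹ * ∑ i, (if σ i then (1 : ℝ) else -1) * f.1 (x i))
        ≤ (n:ℝ)⁻¹ * (n * (ε/2^n)
            + S0.sup' hS0ne (fun v => ∑ i, (if σ i then (1:ℝ) else -1) * v i)
            + ∑ k ∈ Finset.range n,
                (D k).sup' (hDne k) (fun v => ∑ i, (if σ i then (1:ℝ) else -1) * v i)) := by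
      intro σ
      apply ciSup_le
      rintro ⟨f, hf, hloc⟩
      simp only
      apply mul_le_mul_of_nonneg_left _ (by positivity)
      have decomp : ∀ i : Fin n, f (x i)
          = (f (x i) - gg n f hf (x i)) + gg 0 f hf (x i)
            + ∑ k ∈ Finset.range n, (gg (k+1) f hf (x i) - gg k f hf (x i)) := by
        intro i
        rw [Finset.sum_range_sub (fun k => gg k f hf (x i))]
        ring
      have hbound1 : ∑ i, (if σ i then (1:ℝ) else -1) * (f (x i) - gg n f hf (x i))
          ≤ n * (ε/2^n) := by
        calc ∑ i, (if σ i then (1:ℝ) else -1) * (f (x i) - gg n f hf (x i))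
            ≤ ∑ i, |f (x i) - gg n f hf (x i)| :=
              Finset.sum_le_sum (fun i _ => rad_mul_le_abs (σ i) _)
          _ ≤ ∑ _i : Fin n, (ε/2^n) :=
              Finset.sum_le_sum (fun i _ => hggclose n f hf (x i))
          _ = n * (ε/2^n) := by rw [Finset.sum_const]; simp [nsmul_eq_mul]
      have hbound2 : ∑ i, (if σ i then (1:ℝ) else -1) * gg 0 f hf (x i)
          ≤ S0.sup' hS0ne (fun v => ∑ i, (if σ i then (1:ℝ) else -1) * v i) := by
        have hm := hmem0 f hf (hlocsum f hloc)
        exact Finset.le_sup' (fun v => ∑ i, (if σ i then (1:ℝ) else -1) * v i) hm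
      have hbound3 : ∀ k ∈ Finset.range n,
          ∑ i, (if σ i then (1:ℝ) else -1) * (gg (k+1) f hf (x i) - gg k f hf (x i))
          ≤ (D k).sup' (hDne k) (fun v => ∑ i, (if σ i then (1:ℝ) else -1) * v i) := by
        intro k _
        have hm := hmemD k f hf
        exact Finset.le_sup' (fun v => ∑ i, (if σ i then (1:ℝ) else -1) * v i) hm
      calc ∑ i, (if σ i then (1:ℝ) else -1) * f (x i)
          = ∑ i, ((if σ i then (1:ℝ) else -1) * (f (x i) - gg n f hf (x i))
              + (if σ i then (1:ℝ) else -1) * gg 0 f hf (x i)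
              + ∑ k ∈ Finset.range n,
                  (if σ i then (1:ℝ) else -1) * (gg (k+1) f hf (x i) - gg k f hf (x i))) := by
            apply Finset.sum_congr rfl
            intro i _
            conv_lhs => rw [decomp i]
            rw [mul_add, mul_add, Finset.mul_sum]
        _ = (∑ i, (if σ i then (1:ℝ) else -1) * (f (x i) - gg n f hf (x i)))
            + (∑ i, (if σ i then (1:ℝ) else -1) * gg 0 f hf (x i))
            + ∑ i, ∑ k ∈ Finset.range n,
                (if σ i then (1:ℝ) else -1) * (gg (k+1) f hf (x i) - gg k f hf (x i)) := by
            rw [Finset.sum_add_distrib, Finset.sum_add_distrib]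
        _ = (∑ i, (if σ i then (1:ℝ) else -1) * (f (x i) - gg n f hf (x i)))
            + (∑ i, (if σ i then (1:ℝ) else -1) * gg 0 f hf (x i))
            + ∑ k ∈ Finset.range n, ∑ i,
                (if σ i then (1:ℝ) else -1) * (gg (k+1) f hf (x i) - gg k f hf (x i)) := by
            rw [Finset.sum_comm]
        _ ≤ n * (ε/2^n)
            + S0.sup' hS0ne (fun v => ∑ i, (if σ i then (1:ℝ) else -1) * v i)
            + ∑ k ∈ Finset.range n,
                (D k).sup' (hDne k) (fun v => ∑ i, (if σ i then (1:ℝ) else -1) * v i) := by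
            apply add_le_add (add_le_add hbound1 hbound2)
            exact Finset.sum_le_sum hbound3
    -- averaging algebra
    have halg : ((2:ℝ)^n)⁻¹ * ∑ σ : Fin n → Bool, ((n:ℝ)⁻¹ * (n * (ε/2^n)
            + S0.sup' hS0ne (fun v => ∑ i, (if σ i then (1:ℝ) else -1) * v i)
            + ∑ k ∈ Finset.range n,
                (D k).sup' (hDne k) (fun v => ∑ i, (if σ i then (1:ℝ) else -1) * v i)))
        = ε/2^n
          + (n:ℝ)⁻¹ * (((2:ℝ)^n)⁻¹ * ∑ σ : Fin n → Bool,
              S0.sup' hS0ne (fun v => ∑ i, (if σ i then (1:ℝ) else -1) * v i))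
          + ∑ k ∈ Finset.range n, (n:ℝ)⁻¹ * (((2:ℝ)^n)⁻¹ * ∑ σ : Fin n → Bool,
              (D k).sup' (hDne k) (fun v => ∑ i, (if σ i then (1:ℝ) else -1) * v i)) := by
      have e1 : ∀ σ : Fin n → Bool, (n:ℝ)⁻¹ * (n * (ε/2^n)
            + S0.sup' hS0ne (fun v => ∑ i, (if σ i then (1:ℝ) else -1) * v i)
            + ∑ k ∈ Finset.range n,
                (D k).sup' (hDne k) (fun v => ∑ i, (if σ i then (1:ℝ) else -1) * v i))
          = ε/2^n + (n:ℝ)⁻¹ * S0.sup' hS0ne (fun v => ∑ i, (if σ i then (1:ℝ) else -1) * v i)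
            + ∑ k ∈ Finset.range n, (n:ℝ)⁻¹ *
                (D k).sup' (hDne k) (fun v => ∑ i, (if σ i then (1:ℝ) else -1) * v i) := by
        intro σ
        have hh : (n:ℝ)⁻¹ * (n * (ε/2^n)) = ε/2^n := by
          field_simp
        rw [mul_add, mul_add, hh, Finset.mul_sum]
      simp_rw [e1]
      rw [Finset.sum_add_distrib, Finset.sum_add_distrib, mul_add, mul_add]
      congr 1
      · congr 1
        · rw [Finset.sum_const]
          simp only [Finset.card_univ, Fintype.card_fun, Fintype.card_fin, Fintype.card_bool,
            nsmul_eq_mul]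
          push_cast
          rw [← mul_assoc, inv_mul_cancel₀ (by positivity), one_mul]
        · rw [← Finset.mul_sum]
          ring
      · rw [Finset.sum_comm, Finset.mul_sum]
        apply Finset.sum_congr rfl
        intro k _
        rw [← Finset.mul_sum]
        ring
    -- numeric bounds for the three pieces
    have hnn : (n:ℝ) = Real.sqrt n * Real.sqrt n := (Real.mul_self_sqrt hnpos.le).symm
    have hinv : (n:ℝ)⁻¹ * Real.sqrt n = (Real.sqrt n)⁻¹ := by
      field_simp
      exact Real.sq_sqrt hnpos.le
    have t1 : ε/2^n ≤ (ε/Real.sqrt n) * Real.sqrt A := by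
      have h2n : Real.sqrt n ≤ 2^n := by
        have hlt := Nat.lt_two_pow_self (n := n)
        have h2 : (n:ℝ) ≤ 2^n := by exact_mod_cast hlt.le
        have h3 : (1:ℝ) ≤ 2^n := one_le_pow₀ (by norm_num)
        have h1 : (n:ℝ) ≤ ((2:ℝ)^n)^2 := by nlinarith
        calc Real.sqrt n ≤ Real.sqrt (((2:ℝ)^n)^2) := Real.sqrt_le_sqrt h1
          _ = 2^n := Real.sqrt_sq (by positivity)
      calc ε/2^n ≤ ε/Real.sqrt n := by
            apply div_le_div_of_nonneg_left hε0.le hsn h2n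
        _ = (ε/Real.sqrt n) * 1 := by ring
        _ ≤ (ε/Real.sqrt n) * Real.sqrt A := by
            apply mul_le_mul_of_nonneg_left hsA1 (by positivity)
    have t2 : (n:ℝ)⁻¹ * (((2:ℝ)^n)⁻¹ * ∑ σ : Fin n → Bool,
          S0.sup' hS0ne (fun v => ∑ i, (if σ i then (1:ℝ) else -1) * v i))
        ≤ 2*Real.sqrt (2*(1+c)) * ((ε/Real.sqrt n) * Real.sqrt A) := by
      refine le_trans (mul_le_mul_of_nonneg_left hmassart0 (by positivity)) ?_
      have hlog' : Real.sqrt (2*Real.log (2*S0.card)) ≤ Real.sqrt (2*(1+c)) * Real.sqrt A := by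
        rw [← Real.sqrt_mul (by positivity)]
        apply Real.sqrt_le_sqrt
        nlinarith [hlogS0]
      calc (n:ℝ)⁻¹ * ((2*ε*Real.sqrt n) * Real.sqrt (2*Real.log (2*S0.card)))
          ≤ (n:ℝ)⁻¹ * ((2*ε*Real.sqrt n) * (Real.sqrt (2*(1+c)) * Real.sqrt A)) := by
            apply mul_le_mul_of_nonneg_left _ (by positivity)
            apply mul_le_mul_of_nonneg_left hlog' (by positivity)
        _ = ((n:ℝ)⁻¹ * Real.sqrt n) * (2*ε*Real.sqrt (2*(1+c))*Real.sqrt A) := by ring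
        _ = (Real.sqrt n)⁻¹ * (2*ε*Real.sqrt (2*(1+c))*Real.sqrt A) := by rw [hinv]
        _ = 2*Real.sqrt (2*(1+c)) * ((ε/Real.sqrt n) * Real.sqrt A) := by
            simp only [div_eq_mul_inv]
            ring
    have t3 : ∀ k ∈ Finset.range n, (n:ℝ)⁻¹ * (((2:ℝ)^n)⁻¹ * ∑ σ : Fin n → Bool,
          (D k).sup' (hDne k) (fun v => ∑ i, (if σ i then (1:ℝ) else -1) * v i))
        ≤ 3*Real.sqrt (2*(1+2*c)) * ((ε/Real.sqrt n) * Real.sqrt A)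
            * (Real.sqrt ((k:ℝ)+2) * ((2:ℝ)^(k+1))⁻¹) := by
      intro k _
      refine le_trans (mul_le_mul_of_nonneg_left (hmassartD k) (by positivity)) ?_
      have hlog' : Real.sqrt (2*Real.log (2*(D k).card))
          ≤ Real.sqrt (2*(1+2*c)) * Real.sqrt A * Real.sqrt ((k:ℝ)+2) := by
        rw [← Real.sqrt_mul (by positivity), ← Real.sqrt_mul (by positivity)]
        apply Real.sqrt_le_sqrt
        have := hlogD k
        nlinarith
      calc (n:ℝ)⁻¹ * ((3*(ε/2^(k+1))*Real.sqrt n) * Real.sqrt (2*Real.log (2*(D k).card)))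
          ≤ (n:ℝ)⁻¹ * ((3*(ε/2^(k+1))*Real.sqrt n)
              * (Real.sqrt (2*(1+2*c)) * Real.sqrt A * Real.sqrt ((k:ℝ)+2))) := by
            apply mul_le_mul_of_nonneg_left _ (by positivity)
            apply mul_le_mul_of_nonneg_left hlog' (by positivity)
        _ = 3*Real.sqrt (2*(1+2*c)) * ((ε/Real.sqrt n) * Real.sqrt A)
              * (Real.sqrt ((k:ℝ)+2) * ((2:ℝ)^(k+1))⁻¹) := by
            calc (n:ℝ)⁻¹ * ((3*(ε/2^(k+1))*Real.sqrt n)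
                  * (Real.sqrt (2*(1+2*c)) * Real.sqrt A * Real.sqrt ((k:ℝ)+2)))
                = ((n:ℝ)⁻¹ * Real.sqrt n) * (3*(ε/2^(k+1))
                    * Real.sqrt (2*(1+2*c)) * Real.sqrt A * Real.sqrt ((k:ℝ)+2)) := by ring
              _ = (Real.sqrt n)⁻¹ * (3*(ε/2^(k+1))
                    * Real.sqrt (2*(1+2*c)) * Real.sqrt A * Real.sqrt ((k:ℝ)+2)) := by rw [hinv]
              _ = 3*Real.sqrt (2*(1+2*c)) * ((ε/Real.sqrt n) * Real.sqrt A)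
                    * (Real.sqrt ((k:ℝ)+2) * ((2:ℝ)^(k+1))⁻¹) := by
                  simp only [div_eq_mul_inv]
                  ring
    have t3sum : ∑ k ∈ Finset.range n, (n:ℝ)⁻¹ * (((2:ℝ)^n)⁻¹ * ∑ σ : Fin n → Bool,
          (D k).sup' (hDne k) (fun v => ∑ i, (if σ i then (1:ℝ) else -1) * v i))
        ≤ 9*Real.sqrt (2*(1+2*c)) * ((ε/Real.sqrt n) * Real.sqrt A) := by
      calc ∑ k ∈ Finset.range n, (n:ℝ)⁻¹ * (((2:ℝ)^n)⁻¹ * ∑ σ : Fin n → Bool,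
            (D k).sup' (hDne k) (fun v => ∑ i, (if σ i then (1:ℝ) else -1) * v i))
          ≤ ∑ k ∈ Finset.range n, 3*Real.sqrt (2*(1+2*c)) * ((ε/Real.sqrt n) * Real.sqrt A)
              * (Real.sqrt ((k:ℝ)+2) * ((2:ℝ)^(k+1))⁻¹) := Finset.sum_le_sum t3
        _ = 3*Real.sqrt (2*(1+2*c)) * ((ε/Real.sqrt n) * Real.sqrt A)
              * ∑ k ∈ Finset.range n, (Real.sqrt ((k:ℝ)+2) * ((2:ℝ)^(k+1))⁻¹) := by
            rw [Finset.mul_sum]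
        _ ≤ 3*Real.sqrt (2*(1+2*c)) * ((ε/Real.sqrt n) * Real.sqrt A) * 3 := by
            apply mul_le_mul_of_nonneg_left (sum_sqrt_geom n) (by positivity)
        _ = 9*Real.sqrt (2*(1+2*c)) * ((ε/Real.sqrt n) * Real.sqrt A) := by ring
    -- final assembly
    calc ((2:ℝ)^n)⁻¹ * ∑ σ : Fin n → Bool,
          ⨆ f : {f : 𝒳 → ℝ // f ∈ Ftil ∧ (n : ℝ)⁻¹ * ∑ i, (f (x i)) ^ 2 ≤ ε ^ 2},
            (n : ℝ)⁻¹ * ∑ i, (if σ i then (1 : ℝ) else -1) * f.1 (x i)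
        ≤ ((2:ℝ)^n)⁻¹ * ∑ σ : Fin n → Bool, ((n:ℝ)⁻¹ * (n * (ε/2^n)
            + S0.sup' hS0ne (fun v => ∑ i, (if σ i then (1:ℝ) else -1) * v i)
            + ∑ k ∈ Finset.range n,
                (D k).sup' (hDne k) (fun v => ∑ i, (if σ i then (1:ℝ) else -1) * v i))) := by
          apply mul_le_mul_of_nonneg_left (Finset.sum_le_sum (fun σ _ => hperσ σ)) (by positivity)
      _ = ε/2^n
          + (n:ℝ)⁻¹ * (((2:ℝ)^n)⁻¹ * ∑ σ : Fin n → Bool,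
              S0.sup' hS0ne (fun v => ∑ i, (if σ i then (1:ℝ) else -1) * v i))
          + ∑ k ∈ Finset.range n, (n:ℝ)⁻¹ * (((2:ℝ)^n)⁻¹ * ∑ σ : Fin n → Bool,
              (D k).sup' (hDne k) (fun v => ∑ i, (if σ i then (1:ℝ) else -1) * v i)) := halg
      _ ≤ (ε/Real.sqrt n) * Real.sqrt A
          + 2*Real.sqrt (2*(1+c)) * ((ε/Real.sqrt n) * Real.sqrt A)
          + 9*Real.sqrt (2*(1+2*c)) * ((ε/Real.sqrt n) * Real.sqrt A) :=
          add_le_add (add_le_add t1 t2) t3sum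
      _ = (1 + 2*Real.sqrt (2*(1+c)) + 9*Real.sqrt (2*(1+2*c)))
            * (ε / Real.sqrt n) * Real.sqrt A := by ring
end
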